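/- arXiv:math/0612623 — 2 statements merged into one kernel-verified Lean document; each statement's English description precedes it below -/
import Mathlib

section
/- Fix 0 < α < 1 and for each n let a_n be chosen so that P(W_n^{++} ≥ a_n) ≤ α, where W_n^{++} = W_n^{++}(3). Then there is a sequence δ_n → 0 such that for every n and every one-sided Gaussian mixture with fraction ε_n whose mixing distribution H satisfies P(H > 0) = 1, if X_1, …, X_n are i.i.d. from this mixture, the grid estimator satisfies P(ε̂*_{a_n} ≤ ε_n) ≥ (1 − α)(1 − δ_n). -/
open MeasureTheory ProbabilityTheory Filter
open scoped Classical

noncomputable section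

/-- The standard normal density. -/
def stdPdf (x : ℝ) : ℝ := (Real.sqrt (2 * Real.pi))⁻¹ * Real.exp (-(x ^ 2) / 2)

/-- The standard normal cumulative distribution function. -/
def Phi (t : ℝ) : ℝ := ∫ x in Set.Iic t, stdPdf x

/-- `D(μ; τ, τ')`. -/
def Dfun (μ τ τ' : ℝ) : ℝ := (Phi τ - Phi (τ - μ)) / (Phi τ' - Phi (τ' - μ))

/-- Empirical cdf of a sample of size `n`. -/
def empCdf (n : ℕ) (X : Fin n → ℝ) (t : ℝ) : ℝ :=
  (n : ℝ)⁻¹ * ∑ i, if X i ≤ t then (1 : ℝ) else 0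

/-- Upper envelope `F⁺ₐ`. -/
def envP (n : ℕ) (a : ℝ) (G : ℝ → ℝ) (t : ℝ) : ℝ :=
  (2 * G t + a ^ 2 / n + (a / Real.sqrt n) * Real.sqrt (a ^ 2 / n + 4 * G t - 4 * (G t) ^ 2)) /
    (2 * (1 + a ^ 2 / n))

/-- Lower envelope `F⁻ₐ`. -/
def envM (n : ℕ) (a : ℝ) (G : ℝ → ℝ) (t : ℝ) : ℝ :=
  (2 * G t + a ^ 2 / n - (a / Real.sqrt n) * Real.sqrt (a ^ 2 / n + 4 * G t - 4 * (G t) ^ 2)) /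
    (2 * (1 + a ^ 2 / n))

/-- Grid points `t_j = (j - 1)/√(2 log n)`. -/
def gridPt (n : ℕ) (j : ℕ) : ℝ := ((j : ℝ) - 1) / Real.sqrt (2 * Real.log n)

/-- Right-hand side ratio used in the defining equation for `μ̂⁽ʲ⁾`. -/
def ratioJ (n : ℕ) (a : ℝ) (X : Fin n → ℝ) (j : ℕ) : ℝ :=
  (Phi (gridPt n j) - envP n a (empCdf n X) (gridPt n j)) /
    (Phi (gridPt n (j + 1)) - envM n a (empCdf n X) (gridPt n (j + 1)))

/-- `μ̂⁽ʲ⁾`: the solution of `D(μ; t_j, t_{j+1}) = ratio`, when it exists (else 0). -/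
def muHatJ (n : ℕ) (a : ℝ) (X : Fin n → ℝ) (j : ℕ) : ℝ :=
  if h : ∃ μ > 0, Dfun μ (gridPt n j) (gridPt n (j + 1)) = ratioJ n a X j then h.choose else 0

/-- `ε̂⁽ʲ⁾ₐ`. -/
def epsHatJ (n : ℕ) (a : ℝ) (X : Fin n → ℝ) (j : ℕ) : ℝ :=
  if ∃ μ > 0, Dfun μ (gridPt n j) (gridPt n (j + 1)) = ratioJ n a X j then
    (Phi (gridPt n j) - envP n a (empCdf n X) (gridPt n j)) /
      (Phi (gridPt n j) - Phi (gridPt n j - muHatJ n a X j))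
  else 0

/-- The grid estimator `ε̂*ₐ = max_j ε̂⁽ʲ⁾ₐ`. -/
def epsHatStar (n : ℕ) (a : ℝ) (X : Fin n → ℝ) : ℝ :=
  sSup ((fun j => epsHatJ n a X j) '' (Set.Icc 1 (Nat.ceil (2 * Real.log n))))

/-- The statistic `W_n⁺`, as a function of a uniform sample. -/
def WnPlus (n : ℕ) (U : Fin n → ℝ) : ℝ :=
  sSup ((fun t => Real.sqrt n * |empCdf n U t - t| / Real.sqrt (t * (1 - t))) ''
    (Set.Icc (1 / 2) (Phi (Real.sqrt (2 * Real.log n)))))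

/-- The statistic `Y_n`, as a function of the sample, for underlying cdf `F`. -/
def Yn (n : ℕ) (F : ℝ → ℝ) (X : Fin n → ℝ) : ℝ :=
  sSup ((fun t => Real.sqrt n * |empCdf n X t - F t| / Real.sqrt (F t * (1 - F t))) ''
    (Set.Icc 0 (Real.sqrt (2 * Real.log n))))

/-- The statistic `W_n⁺⁺(c₀)`, as a function of the sample, for underlying cdf `F`. -/
def WnPP (c0 : ℝ) (n : ℕ) (F : ℝ → ℝ) (X : Fin n → ℝ) : ℝ :=
  sSup ((fun x => Real.sqrt n * |empCdf n X x - F x| / Real.sqrt (F x * (1 - F x))) ''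
    {x : ℝ | empCdf n X 0 - Real.sqrt (c0 * Real.log n / n) ≤ F x ∧
      F x ≤ Phi (Real.sqrt (2 * Real.log n))})

/-- cdf of the two-point Gaussian mixture `(1-ε)N(0,1) + εN(μ,1)`. -/
def twoPointCdf (ε μ : ℝ) (t : ℝ) : ℝ := (1 - ε) * Phi t + ε * Phi (t - μ)

/-- cdf of the one-sided Gaussian mixture `(1-ε)N(0,1) + ε ∫ N(μ,1) dH(μ)`. -/
def oneSidedCdf (ε : ℝ) (H : Measure ℝ) (t : ℝ) : ℝ :=
  (1 - ε) * Phi t + ε * ∫ m, Phi (t - m) ∂H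

/-- cdf of the Uniform(0,1) distribution. -/
def unifCdf (t : ℝ) : ℝ := max 0 (min t 1)

/-- `X₁, …, Xₙ` are i.i.d. with cdf `F` under `P`. -/
def IIDWithCdf {Ω : Type} [MeasurableSpace Ω] (P : Measure Ω) {n : ℕ}
    (X : Fin n → Ω → ℝ) (F : ℝ → ℝ) : Prop :=
  (∀ i, Measurable (X i)) ∧ iIndepFun X P ∧
    ∀ i t, P {ω | X i ω ≤ t} = ENNReal.ofReal (F t)

/-- The event that `F` lies inside the envelope on `[0, √(2 log n)]`. -/
def EnvEvent (n : ℕ) (a : ℝ) (F : ℝ → ℝ) (X : Fin n → ℝ) : Prop :=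
  ∀ t ∈ Set.Icc (0 : ℝ) (Real.sqrt (2 * Real.log n)),
    envM n a (empCdf n X) t ≤ F t ∧ F t ≤ envP n a (empCdf n X) t

/-- The detection boundary `ρ*(β)`. -/
def rhoStar (β : ℝ) : ℝ :=
  if β ≤ 3 / 4 then β - 1 / 2 else (1 - Real.sqrt (1 - β)) ^ 2

/-!
On the event `W_n⁺⁺ < a_n`, the true cdf `F` lies between the envelopes `F⁻ ≤ F ≤ F⁺` at every
`x ≥ 0` with `F x ≤ Φ(√(2 log n))`, as soon as `F_n(0) - √(3 log n / n) ≤ F(0)`; by Chebyshev the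
latter fails with probability at most `1 / (12 log n)`. Writing `W(τ, μ) = Φ(τ) - Φ(τ - μ)`, one has
`Φ - F = ε ∫ W(·, m) dH(m)`, so the envelopes give
`Φ(t_j) - F⁺(t_j) ≤ ε ∫ W(t_j, ·) dH` and `Φ(t_{j+1}) - F⁻(t_{j+1}) ≥ ε ∫ W(t_{j+1}, ·) dH`.
The Gaussian location family has monotone likelihood ratio, so the curve
`m ↦ (W(t_j, m), W(t_{j+1}, m))` lies on one side of its tangent at `μ̂⁽ʲ⁾`; averaging over `H`
and using the equation defining `μ̂⁽ʲ⁾` yields `∫ W(t_j, ·) dH ≤ W(t_j, μ̂⁽ʲ⁾)`, i.e.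
`ε̂⁽ʲ⁾ ≤ ε`. The last grid point may exceed `√(2 log n)`; controlling it costs the event that an
observation falls in a short interval beyond, of probability at most `1 / (√(2π) √(2 log n))`.
-/

lemma stdPdf_eq_gaussianPDFReal : stdPdf = gaussianPDFReal 0 1 := by
  ext x
  simp [stdPdf, gaussianPDFReal]

lemma stdPdf_pos (x : ℝ) : 0 < stdPdf x := by
  unfold stdPdf
  positivity

lemma continuous_stdPdf : Continuous stdPdf := by
  unfold stdPdf
  fun_prop

lemma integrable_stdPdf : Integrable stdPdf := by
  rw [stdPdf_eq_gaussianPDFReal]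
  exact integrable_gaussianPDFReal 0 1

lemma Phi_sub_Phi (s t : ℝ) : Phi t - Phi s = ∫ x in s..t, stdPdf x :=
  intervalIntegral.integral_Iic_sub_Iic integrable_stdPdf.integrableOn
    integrable_stdPdf.integrableOn

lemma Phi_le_one (t : ℝ) : Phi t ≤ 1 := by
  have h : ∫ x, stdPdf x = 1 := by
    rw [stdPdf_eq_gaussianPDFReal]
    exact integral_gaussianPDFReal_eq_one 0 one_ne_zero
  rw [← h]
  exact setIntegral_le_integral integrable_stdPdf (.of_forall fun x => (stdPdf_pos x).le)

lemma Phi_strictMono : StrictMono Phi := fun s t hst => by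
  have h : 0 < Phi t - Phi s := by
    rw [Phi_sub_Phi]
    exact intervalIntegral.intervalIntegral_pos_of_pos_on
      (continuous_stdPdf.intervalIntegrable _ _) (fun x _ => stdPdf_pos x) hst
  linarith

lemma Phi_mono : Monotone Phi := Phi_strictMono.monotone

lemma Phi_pos (t : ℝ) : 0 < Phi t :=
  (setIntegral_nonneg measurableSet_Iic fun x _ => (stdPdf_pos x).le).trans_lt
    (Phi_strictMono (sub_one_lt t))

lemma Phi_lt_one (t : ℝ) : Phi t < 1 :=
  (Phi_strictMono (lt_add_one t)).trans_le (Phi_le_one _)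

lemma continuous_Phi : Continuous Phi := by
  have h : Phi = fun t => Phi 0 + ∫ x in (0 : ℝ)..t, stdPdf x := by
    ext t
    rw [← Phi_sub_Phi]
    ring
  rw [h]
  exact continuous_const.add
    (intervalIntegral.continuous_primitive (fun _ _ => continuous_stdPdf.intervalIntegrable _ _) 0)

def cdfDeficit (τ μ : ℝ) : ℝ := Phi τ - Phi (τ - μ)

lemma cdfDeficit_sub (τ μ m : ℝ) :
    cdfDeficit τ m - cdfDeficit τ μ = ∫ x in μ..m, stdPdf (τ - x) := by
  rw [intervalIntegral.integral_comp_sub_left stdPdf τ, ← Phi_sub_Phi, cdfDeficit, cdfDeficit]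
  ring

lemma cdfDeficit_eq_integral (τ μ : ℝ) : cdfDeficit τ μ = ∫ x in (0 : ℝ)..μ, stdPdf (τ - x) := by
  simpa [cdfDeficit] using cdfDeficit_sub τ 0 μ

lemma cdfDeficit_pos (τ : ℝ) {μ : ℝ} (hμ : 0 < μ) : 0 < cdfDeficit τ μ :=
  sub_pos.2 (Phi_strictMono (sub_lt_self τ hμ))

lemma continuous_cdfDeficit (τ : ℝ) : Continuous (cdfDeficit τ) :=
  continuous_const.sub (continuous_Phi.comp (continuous_sub_left τ))

lemma integrable_cdfDeficit (τ : ℝ) (H : Measure ℝ) [IsFiniteMeasure H] :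
    Integrable (cdfDeficit τ) H := by
  refine Integrable.mono' (integrable_const 1)
    (continuous_cdfDeficit τ).aestronglyMeasurable (.of_forall fun m => ?_)
  rw [Real.norm_eq_abs, abs_le, cdfDeficit]
  constructor <;> linarith [Phi_pos τ, Phi_le_one τ, Phi_pos (τ - m), Phi_le_one (τ - m)]

lemma stdPdf_mul_stdPdf (u v : ℝ) :
    stdPdf u * stdPdf v = (Real.sqrt (2 * Real.pi))⁻¹ ^ 2 * Real.exp (-(u ^ 2 + v ^ 2) / 2) := by
  rw [stdPdf, stdPdf, show -(u ^ 2 + v ^ 2) / 2 = -u ^ 2 / 2 + -v ^ 2 / 2 by ring, Real.exp_add]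
  ring

lemma stdPdf_mul_stdPdf_le {τ τ' μ x : ℝ} (h : τ ≤ τ') (hx : x ≤ μ) :
    stdPdf (τ' - x) * stdPdf (τ - μ) ≤ stdPdf (τ - x) * stdPdf (τ' - μ) := by
  rw [stdPdf_mul_stdPdf, stdPdf_mul_stdPdf, mul_le_mul_iff_right₀ (by positivity), Real.exp_le_exp]
  nlinarith [mul_nonneg (sub_nonneg.2 h) (sub_nonneg.2 hx)]

lemma stdPdf_mul_stdPdf_lt {τ τ' μ x : ℝ} (h : τ < τ') (hx : x < μ) :
    stdPdf (τ' - x) * stdPdf (τ - μ) < stdPdf (τ - x) * stdPdf (τ' - μ) := by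
  rw [stdPdf_mul_stdPdf, stdPdf_mul_stdPdf, mul_lt_mul_iff_right₀ (by positivity), Real.exp_lt_exp]
  nlinarith [mul_pos (sub_pos.2 h) (sub_pos.2 hx)]

lemma stdPdf_mul_cdfDeficit_sub_le {τ τ' : ℝ} (h : τ ≤ τ') (μ m : ℝ) :
    stdPdf (τ' - μ) * (cdfDeficit τ m - cdfDeficit τ μ) ≤
      stdPdf (τ - μ) * (cdfDeficit τ' m - cdfDeficit τ' μ) := by
  have hint (σ c : ℝ) : Continuous fun x => c * stdPdf (σ - x) :=
    continuous_const.mul (continuous_stdPdf.comp (continuous_sub_left σ))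
  rw [cdfDeficit_sub, cdfDeficit_sub, ← intervalIntegral.integral_const_mul,
    ← intervalIntegral.integral_const_mul]
  rcases le_total μ m with hm | hm
  · exact intervalIntegral.integral_mono_on hm ((hint _ _).intervalIntegrable _ _)
      ((hint _ _).intervalIntegrable _ _) fun x hx => stdPdf_mul_stdPdf_le h hx.1
  · rw [intervalIntegral.integral_symm m μ, intervalIntegral.integral_symm m μ, neg_le_neg_iff]
    refine intervalIntegral.integral_mono_on hm ((hint _ _).intervalIntegrable _ _)
      ((hint _ _).intervalIntegrable _ _) fun x hx => ?_
    linarith [stdPdf_mul_stdPdf_le h hx.2]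

lemma cdfDeficit_mul_stdPdf_sub_pos {τ τ' μ : ℝ} (h : τ < τ') (hμ : 0 < μ) :
    0 < cdfDeficit τ μ * stdPdf (τ' - μ) - cdfDeficit τ' μ * stdPdf (τ - μ) := by
  have hint (σ c : ℝ) : Continuous fun x => stdPdf (σ - x) * c :=
    (continuous_stdPdf.comp (continuous_sub_left σ)).mul continuous_const
  rw [cdfDeficit_eq_integral, cdfDeficit_eq_integral, ← intervalIntegral.integral_mul_const,
    ← intervalIntegral.integral_mul_const, ← intervalIntegral.integral_sub
      ((hint _ _).intervalIntegrable _ _) ((hint _ _).intervalIntegrable _ _)]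
  exact intervalIntegral.intervalIntegral_pos_of_pos_on
    (((hint _ _).sub (hint _ _)).intervalIntegrable _ _)
    (fun x hx => sub_pos.2 (stdPdf_mul_stdPdf_lt h hx.2)) hμ

lemma mul_integral_add_mul_integral_le {α : Type*} [MeasurableSpace α] {H : Measure α}
    [IsProbabilityMeasure H] {f g : α → ℝ} (hf : Integrable f H) (hg : Integrable g H)
    {a b c : ℝ} (h : ∀ x, a * f x + b * g x ≤ c) :
    a * ∫ x, f x ∂H + b * ∫ x, g x ∂H ≤ c := by
  have := integral_mono (f := fun x => a * f x + b * g x)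
    ((hf.const_mul a).add (hg.const_mul b)) (integrable_const c) h
  rwa [integral_add (hf.const_mul a) (hg.const_mul b), integral_const_mul, integral_const_mul,
    integral_const, probReal_univ, one_smul] at this

/- The curve `m ↦ (cdfDeficit τ m, cdfDeficit τ' m)` lies below its tangent line at `μ`, so its
`H`-average does too; combined with the ratio hypothesis this forces `∫ cdfDeficit τ ≤
cdfDeficit τ μ`. -/
lemma integral_cdfDeficit_le {τ τ' μ : ℝ} (h : τ < τ') (hμ : 0 < μ) (H : Measure ℝ)
    [IsProbabilityMeasure H]
    (hle : cdfDeficit τ μ * ∫ m, cdfDeficit τ' m ∂H ≤ (∫ m, cdfDeficit τ m ∂H) * cdfDeficit τ' μ) :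
    ∫ m, cdfDeficit τ m ∂H ≤ cdfDeficit τ μ := by
  have htangent := mul_integral_add_mul_integral_le (integrable_cdfDeficit τ H)
    (integrable_cdfDeficit τ' H) (a := stdPdf (τ' - μ)) (b := -stdPdf (τ - μ))
    (c := stdPdf (τ' - μ) * cdfDeficit τ μ - stdPdf (τ - μ) * cdfDeficit τ' μ)
    fun m => by linarith [stdPdf_mul_cdfDeficit_sub_le h.le μ m]
  have hlam := cdfDeficit_mul_stdPdf_sub_pos h hμ
  have hW := cdfDeficit_pos τ hμ
  have hφ := stdPdf_pos (τ - μ)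
  nlinarith [mul_le_mul_of_nonneg_left hle hφ.le, mul_le_mul_of_nonneg_left htangent hW.le]

lemma integral_pos_of_forall_pos {α : Type*} [MeasurableSpace α] {H : Measure α} [NeZero H]
    {f : α → ℝ} (hf : Integrable f H) (hpos : ∀ x, 0 < f x) : 0 < ∫ x, f x ∂H := by
  rw [integral_pos_iff_support_of_nonneg (fun x => (hpos x).le) hf,
    Function.support_eq_univ fun x => (hpos x).ne']
  exact Measure.measure_univ_pos.2 (NeZero.ne H)

section Mixture

variable {ε : ℝ} {H : Measure ℝ} [IsProbabilityMeasure H]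

lemma integrable_Phi_sub (t : ℝ) : Integrable (fun m => Phi (t - m)) H :=
  Integrable.mono' (integrable_const 1)
    (continuous_Phi.comp (continuous_sub_left t)).aestronglyMeasurable
    (.of_forall fun m => by rw [Real.norm_eq_abs, abs_of_pos (Phi_pos _)]; exact Phi_le_one _)

lemma Phi_sub_oneSidedCdf (t : ℝ) :
    Phi t - oneSidedCdf ε H t = ε * ∫ m, cdfDeficit t m ∂H := by
  simp only [cdfDeficit, oneSidedCdf]
  rw [integral_sub (integrable_const _) (integrable_Phi_sub t), integral_const, probReal_univ,
    one_smul]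
  ring

lemma continuous_oneSidedCdf : Continuous (oneSidedCdf ε H) := by
  refine (continuous_const.mul continuous_Phi).add (continuous_const.mul ?_)
  refine continuous_of_dominated (bound := fun _ => 1)
    (fun t => (integrable_Phi_sub t).aestronglyMeasurable) (fun t => .of_forall fun m => ?_)
    (integrable_const _) (.of_forall fun m => continuous_Phi.comp (continuous_sub_right m))
  rw [Real.norm_eq_abs, abs_of_pos (Phi_pos _)]
  exact Phi_le_one _

lemma oneSidedCdf_pos (hε0 : 0 ≤ ε) (hε1 : ε ≤ 1) (t : ℝ) : 0 < oneSidedCdf ε H t := by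
  have hI : 0 < ∫ m, Phi (t - m) ∂H :=
    integral_pos_of_forall_pos (integrable_Phi_sub t) fun m => Phi_pos _
  rcases hε0.eq_or_lt with rfl | hε
  · simpa [oneSidedCdf] using Phi_pos t
  · exact add_pos_of_nonneg_of_pos (mul_nonneg (by linarith) (Phi_pos t).le) (mul_pos hε hI)

lemma oneSidedCdf_mono (hε0 : 0 ≤ ε) (hε1 : ε ≤ 1) : Monotone (oneSidedCdf ε H) :=
  fun s t hst => add_le_add (mul_le_mul_of_nonneg_left (Phi_mono hst) (by linarith))
    (mul_le_mul_of_nonneg_left (integral_mono (integrable_Phi_sub s) (integrable_Phi_sub t)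
      fun m => Phi_mono (by linarith)) hε0)

lemma oneSidedCdf_le_Phi (hε0 : 0 ≤ ε) (hH : H (Set.Ioi 0) = 1) (t : ℝ) :
    oneSidedCdf ε H t ≤ Phi t := by
  have hpos : ∀ᵐ m ∂H, m ∈ Set.Ioi 0 := by
    rw [ae_mem_iff_measure_eq measurableSet_Ioi.nullMeasurableSet, hH, measure_univ]
  have h := mul_nonneg hε0 (integral_nonneg_of_ae (μ := H) (f := cdfDeficit t)
    (hpos.mono fun m hm => sub_nonneg.2 (Phi_mono (by linarith [Set.mem_Ioi.1 hm]))))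
  linarith [Phi_sub_oneSidedCdf (ε := ε) (H := H) t]

end Mixture

section EmpCdf

variable {n : ℕ} (X : Fin n → ℝ)

lemma empCdf_nonneg (t : ℝ) : 0 ≤ empCdf n X t :=
  mul_nonneg (by positivity) (Finset.sum_nonneg fun i _ => by split_ifs <;> norm_num)

lemma empCdf_le_one (t : ℝ) : empCdf n X t ≤ 1 := by
  rcases Nat.eq_zero_or_pos n with rfl | hn
  · simp [empCdf]
  rw [empCdf, inv_mul_le_iff₀ (by positivity), mul_one]
  calc (∑ i, if X i ≤ t then (1 : ℝ) else 0) ≤ ∑ _i : Fin n, 1 :=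
        Finset.sum_le_sum fun i _ => by split_ifs <;> norm_num
    _ = n := by simp

lemma empCdf_eq_zero {t : ℝ} (h : ∀ i, t < X i) : empCdf n X t = 0 := by
  simp [empCdf, fun i => not_le.2 (h i)]

lemma empCdf_eq_of_forall_notMem_Ioc {u v : ℝ} (huv : u ≤ v) (h : ∀ i, X i ∉ Set.Ioc u v) :
    empCdf n X v = empCdf n X u := by
  unfold empCdf
  congr 1
  refine Finset.sum_congr rfl fun i _ => ?_
  have := h i
  simp only [Set.mem_Ioc, not_and, not_le] at this
  by_cases hu : X i ≤ u
  · simp [hu, hu.trans huv]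
  · simp [hu, this (not_le.1 hu)]

end EmpCdf

/- `envM` and `envP` are the two roots in `F` of `n (G - F)² = a² F (1 - F)`, so the
quadratic is nonpositive exactly between them. -/
lemma envM_le_and_le_envP {n : ℕ} (hn : 0 < n) {a : ℝ} (ha : 0 < a) (G : ℝ → ℝ) {t F : ℝ}
    (hF0 : 0 ≤ F) (hF1 : F ≤ 1)
    (h : Real.sqrt n * |G t - F| ≤ a * Real.sqrt (F * (1 - F))) :
    envM n a G t ≤ F ∧ F ≤ envP n a G t := by
  have hnR : (0 : ℝ) < n := by exact_mod_cast hn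
  set c := a ^ 2 / n with hc
  set r := a / Real.sqrt n with hr
  have hr0 : 0 < r := div_pos ha (Real.sqrt_pos.2 hnR)
  have hr2 : r ^ 2 = c := by rw [hr, hc, div_pow, Real.sq_sqrt hnR.le]
  have hc0 : 0 < c := hr2 ▸ pow_pos hr0 2
  have hsq : (G t - F) ^ 2 ≤ c * (F * (1 - F)) := by
    have h' : |G t - F| ≤ r * Real.sqrt (F * (1 - F)) := by
      rw [hr, div_mul_eq_mul_div, le_div_iff₀ (Real.sqrt_pos.2 hnR)]
      linarith
    have := pow_le_pow_left₀ (abs_nonneg _) h' 2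
    rwa [sq_abs, mul_pow, hr2, Real.sq_sqrt (by nlinarith)] at this
  have hid : c * (c + 4 * G t - 4 * G t ^ 2) - (2 * (1 + c) * F - 2 * G t - c) ^ 2 =
      4 * (1 + c) * (c * (F * (1 - F)) - (G t - F) ^ 2) := by ring
  have hdisc : (2 * (1 + c) * F - 2 * G t - c) ^ 2 ≤ c * (c + 4 * G t - 4 * G t ^ 2) := by
    nlinarith
  have hrad : 0 ≤ c + 4 * G t - 4 * G t ^ 2 := by
    nlinarith [sq_nonneg (2 * (1 + c) * F - 2 * G t - c)]
  set s := Real.sqrt (c + 4 * G t - 4 * G t ^ 2)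
  have hrs : (r * s) ^ 2 = c * (c + 4 * G t - 4 * G t ^ 2) := by
    rw [mul_pow, hr2, Real.sq_sqrt hrad]
  have habs : |2 * (1 + c) * F - 2 * G t - c| ≤ r * s :=
    abs_le_of_sq_le_sq' (hrs ▸ hdisc) (by positivity) |> abs_le.2
  have hd : (0 : ℝ) < 2 * (1 + c) := by linarith
  rw [abs_le] at habs
  constructor
  · rw [envM, div_le_iff₀ hd]; linarith
  · rw [envP, le_div_iff₀ hd]; linarith

section NormalizedDeviation

variable {n : ℕ} {F : ℝ → ℝ} (hF : Monotone F) (hFpos : ∀ t, 0 < F t) (X : Fin n → ℝ)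
include hF hFpos

/- Below the smallest observation `empCdf` vanishes; above it `F` is bounded away from `0`. -/
lemma sq_empCdf_sub_le {p : ℝ} (hp : p < 1) {y : ℝ} (hy : F y ≤ p) :
    (empCdf n X y - F y) ^ 2 ≤
      (1 + ∑ i, (F (X i))⁻¹) / (1 - p) * (F y * (1 - F y)) := by
  set C := 1 + ∑ i, (F (X i))⁻¹
  have hFy := hFpos y
  have hp1 : 0 < 1 - p := by linarith
  have hC1 : 1 ≤ C :=
    le_add_of_nonneg_right (Finset.sum_nonneg fun i _ => inv_nonneg.2 (hFpos _).le)
  rw [div_mul_eq_mul_div, le_div_iff₀ hp1]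
  by_cases hbelow : ∀ i, y < X i
  · rw [empCdf_eq_zero X hbelow]
    have h1 : F y * (1 - p) ≤ 1 - F y := by nlinarith
    have h2 : 1 - F y ≤ C * (1 - F y) := by nlinarith
    nlinarith [mul_le_mul_of_nonneg_left (h1.trans h2) hFy.le]
  · simp only [not_forall, not_lt] at hbelow
    obtain ⟨i, hi⟩ := hbelow
    have hinv : (F y)⁻¹ ≤ C := by
      calc (F y)⁻¹ ≤ (F (X i))⁻¹ := inv_anti₀ (hFpos _) (hF hi)
        _ ≤ ∑ j, (F (X j))⁻¹ :=
          Finset.single_le_sum (fun j _ => inv_nonneg.2 (hFpos _).le) (Finset.mem_univ i)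
        _ ≤ C := le_add_of_nonneg_left zero_le_one
    have hCF : 1 ≤ C * F y := by rw [mul_comm]; exact (inv_le_iff_one_le_mul₀' hFy).1 hinv
    have h01 : (empCdf n X y - F y) ^ 2 ≤ 1 := by
      rw [sq_le_one_iff_abs_le_one, abs_le]
      constructor <;> linarith [empCdf_nonneg X y, empCdf_le_one X y]
    nlinarith [mul_le_mul_of_nonneg_left (show 1 - p ≤ 1 - F y by linarith)
      (by linarith : 0 ≤ C * F y)]

lemma bddAbove_normalizedDeviation {p : ℝ} (hp : p < 1) {S : Set ℝ} (hS : ∀ y ∈ S, F y ≤ p) :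
    BddAbove
      ((fun y => Real.sqrt n * |empCdf n X y - F y| / Real.sqrt (F y * (1 - F y))) '' S) := by
  refine ⟨Real.sqrt n * Real.sqrt ((1 + ∑ i, (F (X i))⁻¹) / (1 - p)), ?_⟩
  rintro _ ⟨y, hy, rfl⟩
  have hFy := hFpos y
  have hden : 0 < Real.sqrt (F y * (1 - F y)) :=
    Real.sqrt_pos.2 (mul_pos hFy (by linarith [hS y hy]))
  rw [div_le_iff₀ hden, mul_assoc, ← Real.sqrt_mul' _ (mul_nonneg hFy.le (by linarith [hS y hy]))]
  exact mul_le_mul_of_nonneg_left (Real.abs_le_sqrt (sq_empCdf_sub_le hF hFpos X hp (hS y hy)))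
    (Real.sqrt_nonneg _)

lemma le_WnPP (c0 : ℝ) {y : ℝ}
    (hy : y ∈ {x : ℝ | empCdf n X 0 - Real.sqrt (c0 * Real.log n / n) ≤ F x ∧
      F x ≤ Phi (Real.sqrt (2 * Real.log n))}) :
    Real.sqrt n * |empCdf n X y - F y| / Real.sqrt (F y * (1 - F y)) ≤ WnPP c0 n F X :=
  le_csSup (bddAbove_normalizedDeviation hF hFpos X (Phi_lt_one _) fun _ hx => hx.2) ⟨y, hy, rfl⟩

end NormalizedDeviation

lemma WnPP_nonneg (c0 : ℝ) (n : ℕ) (F : ℝ → ℝ) (X : Fin n → ℝ) : 0 ≤ WnPP c0 n F X :=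
  Real.sSup_nonneg fun _ ⟨_, _, hv⟩ => hv ▸ by positivity

lemma envelope_of_WnPP_lt {n : ℕ} (hn : 0 < n) {F : ℝ → ℝ} (hF : Monotone F)
    (hFpos : ∀ t, 0 < F t) (X : Fin n → ℝ) {c0 a : ℝ} (hW : WnPP c0 n F X < a) {y : ℝ}
    (hy1 : empCdf n X 0 - Real.sqrt (c0 * Real.log n / n) ≤ F y)
    (hy2 : F y ≤ Phi (Real.sqrt (2 * Real.log n))) :
    envM n a (empCdf n X) y ≤ F y ∧ F y ≤ envP n a (empCdf n X) y := by
  have hF1 : F y < 1 := hy2.trans_lt (Phi_lt_one _)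
  have hden : 0 < Real.sqrt (F y * (1 - F y)) := Real.sqrt_pos.2 (mul_pos (hFpos y) (by linarith))
  have hlt := (le_WnPP hF hFpos X c0 ⟨hy1, hy2⟩).trans_lt hW
  rw [div_lt_iff₀ hden] at hlt
  exact envM_le_and_le_envP hn ((WnPP_nonneg c0 n F X).trans_lt hW) _ (hFpos y).le hF1.le hlt.le

section Grid

variable {n : ℕ}

lemma gridPt_lt_gridPt_succ (hn : 1 < n) (j : ℕ) : gridPt n j < gridPt n (j + 1) := by
  have hlog : 0 < Real.log n := Real.log_pos (by exact_mod_cast hn)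
  unfold gridPt
  gcongr
  linarith

lemma gridPt_nonneg {j : ℕ} (hj : 1 ≤ j) : 0 ≤ gridPt n j :=
  div_nonneg (by simp only [sub_nonneg, Nat.one_le_cast, hj]) (Real.sqrt_nonneg _)

lemma gridPt_sub_sqrt_lt (hn : 1 < n) (j : ℕ) :
    gridPt n j - Real.sqrt (2 * Real.log n) <
      (j - ⌈2 * Real.log n⌉₊) / Real.sqrt (2 * Real.log n) := by
  have hlog : 0 < 2 * Real.log n := by
    linarith [Real.log_pos (by exact_mod_cast hn : (1 : ℝ) < n)]
  have hs := Real.sqrt_pos.2 hlog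
  rw [gridPt, sub_lt_iff_lt_add', add_div' _ _ _ hs.ne', Real.mul_self_sqrt hlog.le,
    div_lt_div_iff_of_pos_right hs]
  linarith [Nat.ceil_lt_add_one hlog.le]

lemma gridPt_le_sqrt (hn : 1 < n) {j : ℕ} (hj : j ≤ ⌈2 * Real.log n⌉₊) :
    gridPt n j ≤ Real.sqrt (2 * Real.log n) := by
  have := gridPt_sub_sqrt_lt hn j
  have : ((j : ℝ) - ⌈2 * Real.log n⌉₊) / Real.sqrt (2 * Real.log n) ≤ 0 :=
    div_nonpos_of_nonpos_of_nonneg (by simp [hj]) (Real.sqrt_nonneg _)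
  linarith

end Grid

lemma Phi_sub_Phi_le_mul_stdPdf {s t : ℝ} (hs : 0 ≤ s) (hst : s ≤ t) :
    Phi t - Phi s ≤ (t - s) * stdPdf s := by
  rw [Phi_sub_Phi, ← smul_eq_mul, ← intervalIntegral.integral_const]
  refine intervalIntegral.integral_mono_on hst (continuous_stdPdf.intervalIntegrable _ _)
    intervalIntegrable_const fun x hx => ?_
  unfold stdPdf
  gcongr
  nlinarith [hx.1]

lemma stdPdf_sqrt_two_mul_log {n : ℕ} (hn : 0 < n) :
    stdPdf (Real.sqrt (2 * Real.log n)) = (Real.sqrt (2 * Real.pi))⁻¹ * (n : ℝ)⁻¹ := by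
  have hlog : 0 ≤ Real.log n := Real.log_nonneg (by exact_mod_cast hn)
  rw [stdPdf, Real.sq_sqrt (by positivity), show -(2 * Real.log n) / 2 = -Real.log n by ring,
    Real.exp_neg, Real.exp_log (by exact_mod_cast hn)]

def tailError (n : ℕ) : ℝ := 1 / (Real.sqrt (2 * Real.pi) * Real.sqrt (2 * Real.log n))

lemma mul_max_Phi_gridPt_sub_le {n : ℕ} (hn : 1 < n) :
    n * max 0 (Phi (gridPt n (⌈2 * Real.log n⌉₊ + 1)) - Phi (Real.sqrt (2 * Real.log n))) ≤
      tailError n := by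
  set tc := Real.sqrt (2 * Real.log n)
  set b := gridPt n (⌈2 * Real.log n⌉₊ + 1)
  have htc : 0 < tc :=
    Real.sqrt_pos.2 (by linarith [Real.log_pos (by exact_mod_cast hn : (1 : ℝ) < n)])
  have hnR : (0 : ℝ) < n := by positivity
  have hb : b - tc < 1 / tc := by
    have := gridPt_sub_sqrt_lt hn (⌈2 * Real.log n⌉₊ + 1)
    rwa [Nat.cast_add_one, add_sub_cancel_left] at this
  rcases le_total b tc with hbtc | hbtc
  · rw [max_eq_left (sub_nonpos.2 (Phi_mono hbtc)), mul_zero]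
    exact (div_pos one_pos (by positivity)).le
  · calc n * max 0 (Phi b - Phi tc) ≤ n * ((b - tc) * stdPdf tc) := by
          gcongr
          exact max_le (mul_nonneg (sub_nonneg.2 hbtc) (stdPdf_pos _).le)
            (Phi_sub_Phi_le_mul_stdPdf htc.le hbtc)
      _ ≤ n * (1 / tc * ((Real.sqrt (2 * Real.pi))⁻¹ * (n : ℝ)⁻¹)) := by
          rw [← stdPdf_sqrt_two_mul_log (by omega)]
          gcongr
          exact (stdPdf_pos _).le
      _ = tailError n := by
          rw [tailError]
          field_simp
          exact (div_self htc.ne').symm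

lemma exists_mem_Icc_le_and_sub_le_max {F : ℝ → ℝ} (hF : Continuous F) {a b c : ℝ}
    (hab : a ≤ b) (ha : F a ≤ c) : ∃ x ∈ Set.Icc a b, F x ≤ c ∧ F b - F x ≤ max 0 (F b - c) := by
  by_cases hb : F b ≤ c
  · exact ⟨b, Set.right_mem_Icc.2 hab, hb, by simp⟩
  · obtain ⟨x, hx, hFx⟩ := intermediate_value_Icc hab hF.continuousOn ⟨ha, (not_le.1 hb).le⟩
    exact ⟨x, hx, hFx.le, hFx ▸ le_max_right _ _⟩

lemma div_cdfDeficit_le_of_Dfun_eq {τ τ' μ ε num den : ℝ} (h : τ < τ') (hμ : 0 < μ)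
    (hε : 0 ≤ ε) {H : Measure ℝ} [IsProbabilityMeasure H] (hD : Dfun μ τ τ' = num / den)
    (hnum : num ≤ ε * ∫ m, cdfDeficit τ m ∂H) (hden : ε * ∫ m, cdfDeficit τ' m ∂H ≤ den) :
    num / cdfDeficit τ μ ≤ ε := by
  have hW := cdfDeficit_pos τ hμ
  have hW' := cdfDeficit_pos τ' hμ
  rcases le_or_gt num 0 with hnum0 | hnum0
  · exact (div_nonpos_of_nonpos_of_nonneg hnum0 hW.le).trans hε
  have hD' : cdfDeficit τ μ / cdfDeficit τ' μ = num / den := hD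
  have hden0 : 0 < den := (div_pos_iff_of_pos_left hnum0).1 (hD' ▸ div_pos hW hW')
  have hεpos : 0 < ε := hε.lt_of_ne (by rintro rfl; linarith)
  have hcross : cdfDeficit τ μ * den = num * cdfDeficit τ' μ :=
    (div_eq_div_iff hW'.ne' hden0.ne').1 hD'
  have hratio : cdfDeficit τ μ * ∫ m, cdfDeficit τ' m ∂H ≤
      (∫ m, cdfDeficit τ m ∂H) * cdfDeficit τ' μ := by
    refine le_of_mul_le_mul_left ?_ hεpos
    nlinarith [mul_le_mul_of_nonneg_left hden hW.le, mul_le_mul_of_nonneg_right hnum hW'.le]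
  rw [div_le_iff₀ hW]
  nlinarith [integral_cdfDeficit_le h hμ H hratio]

section Estimator

variable {n : ℕ} {a ε : ℝ} {H : Measure ℝ} [IsProbabilityMeasure H]

lemma epsHatJ_le (hn : 1 < n) (hε0 : 0 ≤ ε) (X : Fin n → ℝ) (j : ℕ)
    (hP : oneSidedCdf ε H (gridPt n j) ≤ envP n a (empCdf n X) (gridPt n j))
    (hM : envM n a (empCdf n X) (gridPt n (j + 1)) ≤ oneSidedCdf ε H (gridPt n (j + 1))) :
    epsHatJ n a X j ≤ ε := by
  unfold epsHatJ
  split_ifs with hsol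
  · rw [muHatJ, dif_pos hsol]
    exact div_cdfDeficit_le_of_Dfun_eq (gridPt_lt_gridPt_succ hn j) hsol.choose_spec.1 hε0
      hsol.choose_spec.2 (by linarith [Phi_sub_oneSidedCdf (ε := ε) (H := H) (gridPt n j)])
      (by linarith [Phi_sub_oneSidedCdf (ε := ε) (H := H) (gridPt n (j + 1))])
  · exact hε0

/- The last grid point may overshoot `√(2 log n)`, where `W_n⁺⁺` gives no control; there the
lower envelope is transported from a point `x₀` with no observation between `x₀` and it. -/
lemma epsHatStar_le (hn : 1 < n) (hε0 : 0 ≤ ε) (hε1 : ε ≤ 1) (hH : H (Set.Ioi 0) = 1)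
    (X : Fin n → ℝ) (hW : WnPP 3 n (oneSidedCdf ε H) X < a)
    (h0 : empCdf n X 0 - Real.sqrt (3 * Real.log n / n) ≤ oneSidedCdf ε H 0)
    {x₀ : ℝ} (hx₀ : x₀ ∈ Set.Icc 0 (gridPt n (⌈2 * Real.log n⌉₊ + 1)))
    (hFx₀ : oneSidedCdf ε H x₀ ≤ Phi (Real.sqrt (2 * Real.log n)))
    (hgap : ∀ i, X i ∉ Set.Ioc x₀ (gridPt n (⌈2 * Real.log n⌉₊ + 1))) :
    epsHatStar n a X ≤ ε := by
  set F := oneSidedCdf ε H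
  have hFmono : Monotone F := oneSidedCdf_mono hε0 hε1
  have henv : ∀ y, 0 ≤ y → F y ≤ Phi (Real.sqrt (2 * Real.log n)) →
      envM n a (empCdf n X) y ≤ F y ∧ F y ≤ envP n a (empCdf n X) y := fun y hy0 hy =>
    envelope_of_WnPP_lt (by omega) hFmono (oneSidedCdf_pos hε0 hε1) X hW
      (h0.trans (hFmono hy0)) hy
  have henv_grid : ∀ j, 1 ≤ j → j ≤ ⌈2 * Real.log n⌉₊ →
      envM n a (empCdf n X) (gridPt n j) ≤ F (gridPt n j) ∧
        F (gridPt n j) ≤ envP n a (empCdf n X) (gridPt n j) := fun j hj1 hjK =>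
    henv _ (gridPt_nonneg hj1)
      ((oneSidedCdf_le_Phi hε0 hH _).trans (Phi_mono (gridPt_le_sqrt hn hjK)))
  refine Real.sSup_le (fun _ ⟨j, ⟨hj1, hjK⟩, hj⟩ => hj ▸ ?_) hε0
  refine epsHatJ_le hn hε0 X j (henv_grid j hj1 hjK).2 ?_
  rcases hjK.lt_or_eq with hjK | rfl
  · exact (henv_grid (j + 1) (by omega) hjK).1
  · have hempty := empCdf_eq_of_forall_notMem_Ioc X hx₀.2 hgap
    calc envM n a (empCdf n X) (gridPt n (⌈2 * Real.log n⌉₊ + 1))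
        = envM n a (empCdf n X) x₀ := by simp only [envM, hempty]
      _ ≤ F x₀ := (henv x₀ hx₀.1 hFx₀).1
      _ ≤ F (gridPt n (⌈2 * Real.log n⌉₊ + 1)) := hFmono hx₀.2

end Estimator

section Probability

variable {Ω : Type} [MeasurableSpace Ω] {P : Measure Ω} [IsProbabilityMeasure P] {n : ℕ}

lemma variance_le_one_div_four_of_sq_eq {Z : Ω → ℝ} (hZ : MemLp Z 2 P) (hsq : Z ^ 2 = Z) :
    variance Z P ≤ 1 / 4 := by
  rw [variance_eq_sub hZ, hsq]
  nlinarith [sq_nonneg (P[Z] - 1 / 2)]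

lemma measure_le_abs_empCdf_sub_le (hn : 0 < n) {X : Fin n → Ω → ℝ} {F : ℝ → ℝ}
    (hX : IIDWithCdf P X F) (t : ℝ) (hFt : 0 ≤ F t) {s : ℝ} (hs : 0 < s) :
    P {ω | s ≤ |empCdf n (fun i => X i ω) t - F t|} ≤ ENNReal.ofReal (1 / (4 * n * s ^ 2)) := by
  obtain ⟨hmeas, hindep, hcdf⟩ := hX
  set Z : Fin n → Ω → ℝ := fun i => (Set.Iic t).indicator 1 ∘ X i
  have hind : Measurable ((Set.Iic t).indicator (1 : ℝ → ℝ)) :=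
    measurable_const.indicator measurableSet_Iic
  have hZ_eq (i : Fin n) : Z i = (X i ⁻¹' Set.Iic t).indicator 1 := by
    ext ω; simp [Z, Set.indicator]
  have hZ_mem (i : Fin n) : MemLp (Z i) 2 P :=
    MemLp.of_bound (hind.comp (hmeas i)).aestronglyMeasurable 1 (.of_forall fun ω => by
      simp only [Z, Function.comp_apply, Set.indicator, Pi.one_apply]
      split_ifs <;> norm_num)
  have hZ_mean (i : Fin n) : P[Z i] = F t := by
    rw [hZ_eq, integral_indicator_one ((hmeas i) measurableSet_Iic), measureReal_def]
    simp [Set.preimage, hcdf i t, hFt]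
  have hZ_var (i : Fin n) : variance (Z i) P ≤ 1 / 4 :=
    variance_le_one_div_four_of_sq_eq (hZ_mem i) (by
      ext ω; simp only [Z, Pi.pow_apply, Function.comp_apply, Set.indicator]; split_ifs <;> norm_num)
  have hY : (fun ω => empCdf n (fun i => X i ω) t) = fun ω => (n : ℝ)⁻¹ * (∑ i, Z i) ω := by
    ext ω; simp [empCdf, Z, Set.indicator, Finset.sum_apply]
  have hsum_mem : MemLp (∑ i, Z i) 2 P := memLp_finsetSum' _ fun i _ => hZ_mem i
  have hY_mem : MemLp (fun ω => empCdf n (fun i => X i ω) t) 2 P :=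
    hY ▸ hsum_mem.const_mul _
  have hY_mean : P[fun ω => empCdf n (fun i => X i ω) t] = F t := by
    simp only [hY, Finset.sum_apply]
    rw [integral_const_mul, integral_finsetSum _ fun i _ => (hZ_mem i).integrable one_le_two]
    simp only [hZ_mean, Finset.sum_const, Finset.card_univ, Fintype.card_fin, nsmul_eq_mul]
    field_simp
  have hY_var : variance (fun ω => empCdf n (fun i => X i ω) t) P ≤ 1 / (4 * n) := by
    rw [hY, variance_const_mul, IndepFun.variance_sum (fun i _ => hZ_mem i)
      fun i _ j _ hij => (hindep.indepFun hij).comp hind hind]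
    calc (n : ℝ)⁻¹ ^ 2 * ∑ i, variance (Z i) P ≤ (n : ℝ)⁻¹ ^ 2 * ∑ _i : Fin n, (1 / 4 : ℝ) := by
          gcongr with i; exact hZ_var i
      _ = (1 : ℝ) / (4 * n) := by simp; field_simp
  have hcheb := meas_ge_le_variance_div_sq hY_mem hs
  rw [hY_mean] at hcheb
  refine hcheb.trans (ENNReal.ofReal_le_ofReal ?_)
  calc variance (fun ω => empCdf n (fun i => X i ω) t) P / s ^ 2 ≤ 1 / (4 * n) / s ^ 2 := by
        gcongr
    _ = 1 / (4 * n * s ^ 2) := by rw [div_div]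

lemma measure_exists_mem_Ioc_le {X : Fin n → Ω → ℝ} {F : ℝ → ℝ} (hmeas : ∀ i, Measurable (X i))
    (hcdf : ∀ i t, P {ω | X i ω ≤ t} = ENNReal.ofReal (F t)) {u v : ℝ} (huv : u ≤ v)
    (hFu : 0 ≤ F u) :
    P {ω | ∃ i, X i ω ∈ Set.Ioc u v} ≤ ENNReal.ofReal (n * (F v - F u)) := by
  have hone (i : Fin n) : P {ω | X i ω ∈ Set.Ioc u v} = ENNReal.ofReal (F v - F u) := by
    have hdiff : {ω | X i ω ∈ Set.Ioc u v} = {ω | X i ω ≤ v} \ {ω | X i ω ≤ u} := by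
      ext ω; simp [and_comm]
    rw [hdiff, measure_sdiff (s₁ := {ω | X i ω ≤ v}) (s₂ := {ω | X i ω ≤ u})
      (fun ω hω => le_trans hω huv) ((hmeas i) measurableSet_Iic).nullMeasurableSet
      (measure_ne_top _ _), hcdf, hcdf,
      ENNReal.ofReal_sub _ hFu]
  calc P {ω | ∃ i, X i ω ∈ Set.Ioc u v} = P (⋃ i, {ω | X i ω ∈ Set.Ioc u v}) := by
        rw [Set.ofPred_exists]
    _ ≤ ∑ i, P {ω | X i ω ∈ Set.Ioc u v} := measure_iUnion_fintype_le _ _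
    _ = n * ENNReal.ofReal (F v - F u) := by
        simp only [hone, Finset.sum_const, Finset.card_univ, Fintype.card_fin, nsmul_eq_mul]
    _ = ENNReal.ofReal (n * (F v - F u)) := by
        rw [ENNReal.ofReal_mul (Nat.cast_nonneg n), ENNReal.ofReal_natCast]

lemma ofReal_one_sub_le_measure {A B C T : Set Ω} {p q r : ℝ} (hp : 0 ≤ p) (hq : 0 ≤ q)
    (hr : 0 ≤ r) (hA : P A ≤ ENNReal.ofReal p) (hB : P B ≤ ENNReal.ofReal q)
    (hC : P C ≤ ENNReal.ofReal r) (hT : (A ∪ B ∪ C)ᶜ ⊆ T) :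
    ENNReal.ofReal (1 - (p + q + r)) ≤ P T := by
  have hbad : P (A ∪ B ∪ C) ≤ ENNReal.ofReal (p + q + r) := by
    rw [ENNReal.ofReal_add (by positivity) hr, ENNReal.ofReal_add hp hq]
    exact (measure_union_le _ _).trans
      (add_le_add ((measure_union_le _ _).trans (add_le_add hA hB)) hC)
  rw [ENNReal.ofReal_sub _ (by positivity), ENNReal.ofReal_one, tsub_le_iff_left]
  calc 1 = P Set.univ := measure_univ.symm
    _ ≤ P (A ∪ B ∪ C) + P (A ∪ B ∪ C)ᶜ := measure_univ_le_add_compl _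
    _ ≤ ENNReal.ofReal (p + q + r) + P T := add_le_add hbad (measure_mono hT)

end Probability

def chebyshevError (n : ℕ) : ℝ := 1 / (12 * Real.log n)

lemma tendsto_chebyshevError : Tendsto chebyshevError atTop (nhds 0) := by
  unfold chebyshevError
  simp only [one_div]
  exact ((Real.tendsto_log_atTop.comp tendsto_natCast_atTop_atTop).const_mul_atTop
    (by norm_num)).inv_tendsto_atTop

lemma tendsto_tailError : Tendsto tailError atTop (nhds 0) := by
  have hlog := (Real.tendsto_log_atTop.comp tendsto_natCast_atTop_atTop).const_mul_atTop two_pos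
  unfold tailError
  simp only [one_div]
  exact ((Real.tendsto_sqrt_atTop.comp hlog).const_mul_atTop
    (Real.sqrt_pos.2 (by positivity))).inv_tendsto_atTop

lemma ofReal_le_measure_epsHatStar_le {Ω : Type} [MeasurableSpace Ω] {P : Measure Ω}
    [IsProbabilityMeasure P] {n : ℕ} {α a ε : ℝ} (hα : 0 ≤ α) (hε0 : 0 ≤ ε) (hε1 : ε ≤ 1)
    {H : Measure ℝ} [IsProbabilityMeasure H] (hH : H (Set.Ioi 0) = 1) {X : Fin n → Ω → ℝ}
    (hX : IIDWithCdf P X (oneSidedCdf ε H))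
    (hW : P {ω | a ≤ WnPP 3 n (oneSidedCdf ε H) (fun i => X i ω)} ≤ ENNReal.ofReal α) :
    ENNReal.ofReal (1 - (α + chebyshevError n + tailError n)) ≤
      P {ω | epsHatStar n a (fun i => X i ω) ≤ ε} := by
  rcases le_or_gt n 1 with hn | hn
  · have hlog : Real.log n = 0 := by interval_cases n <;> simp
    have huniv : {ω | epsHatStar n a (fun i => X i ω) ≤ ε} = Set.univ := by
      ext ω
      simp [epsHatStar, hlog, hε0]
    rw [huniv, measure_univ]
    exact ENNReal.ofReal_le_one.2 (by simp [chebyshevError, tailError, hlog]; linarith)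
  set F := oneSidedCdf ε H
  have hlog : 0 < Real.log n := Real.log_pos (by exact_mod_cast hn)
  have hFpos := oneSidedCdf_pos (H := H) hε0 hε1
  obtain ⟨x₀, hx₀, hFx₀, hFb⟩ := exists_mem_Icc_le_and_sub_le_max continuous_oneSidedCdf
    (gridPt_nonneg (n := n) (j := ⌈2 * Real.log n⌉₊ + 1) (by omega))
    ((oneSidedCdf_le_Phi hε0 hH 0).trans (Phi_mono (Real.sqrt_nonneg (2 * Real.log n))))
  refine ofReal_one_sub_le_measure hα (by unfold chebyshevError; positivity)
    (by unfold tailError; positivity) hW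
    ((measure_le_abs_empCdf_sub_le (by omega) hX 0 (hFpos 0).le
      (Real.sqrt_pos.2 (by positivity : 0 < 3 * Real.log n / n))).trans_eq ?_)
    ((measure_exists_mem_Ioc_le hX.1 hX.2.2 hx₀.2 (hFpos x₀).le).trans
      (ENNReal.ofReal_le_ofReal ?_)) ?_
  · rw [chebyshevError, Real.sq_sqrt (by positivity)]
    congr 1
    field_simp
    ring
  · refine le_trans ?_ (mul_max_Phi_gridPt_sub_le hn)
    gcongr
    exact hFb.trans (max_le_max le_rfl (sub_le_sub_right (oneSidedCdf_le_Phi hε0 hH _) _))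
  · intro ω hω
    simp only [Set.mem_compl_iff, Set.mem_union, Set.mem_ofPred_eq, not_or, not_le,
      not_exists] at hω
    obtain ⟨⟨hWω, h0⟩, hgap⟩ := hω
    exact epsHatStar_le hn hε0 hε1 hH _ hWω (by linarith [le_abs_self (empCdf n (X · ω) 0 - F 0)])
      hx₀ hFx₀ hgap

theorem stmt3_general (α : ℝ) (hα : 0 < α) (a : ℕ → ℝ)
    (ha : ∀ n : ℕ, ∀ ε : ℝ, 0 ≤ ε → ε ≤ 1 →
      ∀ H : Measure ℝ, IsProbabilityMeasure H → H (Set.Ioi 0) = 1 →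
        ∀ (Ω : Type) [MeasurableSpace Ω] (Q : Measure Ω), IsProbabilityMeasure Q →
          ∀ X : Fin n → Ω → ℝ, IIDWithCdf Q X (oneSidedCdf ε H) →
            Q {ω | a n ≤ WnPP 3 n (oneSidedCdf ε H) (fun i => X i ω)} ≤ ENNReal.ofReal α) :
    ∃ δ : ℕ → ℝ, Filter.Tendsto δ Filter.atTop (nhds 0) ∧
      ∀ n : ℕ, ∀ ε : ℝ, 0 ≤ ε → ε ≤ 1 →
        ∀ H : Measure ℝ, IsProbabilityMeasure H → H (Set.Ioi 0) = 1 →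
          ∀ (Ω : Type) [MeasurableSpace Ω] (P : Measure Ω), IsProbabilityMeasure P →
            ∀ X : Fin n → Ω → ℝ, IIDWithCdf P X (oneSidedCdf ε H) →
              ENNReal.ofReal ((1 - α) * (1 - δ n)) ≤
                P {ω | epsHatStar n (a n) (fun i => X i ω) ≤ ε} := by
  refine ⟨fun n => (chebyshevError n + tailError n) / (1 - α), ?_, ?_⟩
  · simpa using (tendsto_chebyshevError.add tendsto_tailError).div_const (1 - α)
  intro n ε hε0 hε1 H hH hHpos Ω _ P hP X hX
  refine le_trans ?_ (ofReal_le_measure_epsHatStar_le hα.le hε0 hε1 hHpos hX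
    (ha n ε hε0 hε1 H hH hHpos Ω P hP X hX))
  rcases eq_or_ne α 1 with rfl | hα1
  · simp
  · apply ENNReal.ofReal_le_ofReal
    rw [mul_one_sub, mul_div_cancel₀ _ (sub_ne_zero.2 hα1.symm)]
    linarith

/-- with `aₙ` an `α`-upper percentile of `Wₙ⁺⁺ = Wₙ⁺⁺(3)`, the grid
estimator is an asymptotic `1 - α` lower confidence bound for `ε`, uniformly over
all one-sided Gaussian mixtures with `P(H > 0) = 1`. -/
theorem stmt3 (α : ℝ) (hα : 0 < α) (hα1 : α < 1) (a : ℕ → ℝ)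
    (ha : ∀ n : ℕ, ∀ ε : ℝ, 0 ≤ ε → ε ≤ 1 →
      ∀ H : Measure ℝ, IsProbabilityMeasure H → H (Set.Ioi 0) = 1 →
        ∀ (Ω : Type) [MeasurableSpace Ω] (Q : Measure Ω), IsProbabilityMeasure Q →
          ∀ X : Fin n → Ω → ℝ, IIDWithCdf Q X (oneSidedCdf ε H) →
            Q {ω | a n ≤ WnPP 3 n (oneSidedCdf ε H) (fun i => X i ω)} ≤ ENNReal.ofReal α) :
    ∃ δ : ℕ → ℝ, Filter.Tendsto δ Filter.atTop (nhds 0) ∧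
      ∀ n : ℕ, ∀ ε : ℝ, 0 ≤ ε → ε ≤ 1 →
        ∀ H : Measure ℝ, IsProbabilityMeasure H → H (Set.Ioi 0) = 1 →
          ∀ (Ω : Type) [MeasurableSpace Ω] (P : Measure Ω), IsProbabilityMeasure P →
            ∀ X : Fin n → Ω → ℝ, IIDWithCdf P X (oneSidedCdf ε H) →
              ENNReal.ofReal ((1 - α) * (1 - δ n)) ≤
                P {ω | epsHatStar n (a n) (fun i => X i ω) ≤ ε} :=
  stmt3_general α hα a ha

end
end

section
/- For any constant c_0 > 0 there exist a constant C > 0 and N such that for all n ≥ N, P(W_n^+ ≥ c_0 (log n)^{3/2}) ≤ C · n^{−1.5 c_0/√(8π)}. -/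
set_option maxHeartbeats 1000000
set_option linter.unusedSectionVars false


open MeasureTheory ProbabilityTheory Filter
open scoped Classical

noncomputable section

lemma stdPdf_eq (x : ℝ) : stdPdf x = (Real.sqrt (2 * Real.pi))⁻¹ * Real.exp (-(1/2) * x ^ 2) := by
  unfold stdPdf; ring_nf

lemma integral_stdPdf : ∫ x, stdPdf x = 1 := by
  have : ∫ x, stdPdf x = (Real.sqrt (2 * Real.pi))⁻¹ * ∫ x, Real.exp (-(1/2) * x ^ 2) := by
    rw [← integral_const_mul]
    congr 1; funext x; rw [stdPdf_eq]
  rw [this, integral_gaussian]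
  rw [show Real.pi / (1/2) = 2 * Real.pi by ring]
  rw [inv_mul_cancel₀ (by positivity)]

lemma Phi_mono_s8 {a b : ℝ} (h : a ≤ b) : Phi a ≤ Phi b := by
  apply setIntegral_mono_set integrable_stdPdf.integrableOn
    (Filter.Eventually.of_forall fun x => (stdPdf_pos x).le)
    (HasSubset.Subset.eventuallyLE (Set.Iic_subset_Iic.2 h))

lemma Phi_add_tail (t : ℝ) : Phi t + ∫ x in Set.Ioi t, stdPdf x = 1 := by
  rw [show (1:ℝ) = ∫ x, stdPdf x from integral_stdPdf.symm]
  exact intervalIntegral.integral_Iic_add_Ioi integrable_stdPdf.integrableOn integrable_stdPdf.integrableOn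

lemma Phi_zero : Phi 0 = 1/2 := by
  have h1 : Phi 0 + ∫ x in Set.Ioi (0:ℝ), stdPdf x = 1 := Phi_add_tail 0
  have h2 : (∫ x in Set.Ioi (0:ℝ), stdPdf x) = Phi 0 := by
    have : (∫ x in Set.Ioi (0:ℝ), stdPdf x) = ∫ x in Set.Ioi (0:ℝ), stdPdf (-x) := by
      congr 1; funext x; unfold stdPdf; rw [neg_sq]
    rw [this, integral_comp_neg_Ioi, neg_zero]; rfl
  rw [h2] at h1; linarith

lemma half_le_Phi {x : ℝ} (hx : 0 ≤ x) : 1/2 ≤ Phi x := Phi_zero ▸ Phi_mono_s8 hx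

lemma stdPdf_anti {a b : ℝ} (ha : 0 ≤ a) (hab : a ≤ b) : stdPdf b ≤ stdPdf a := by
  unfold stdPdf
  have : Real.exp (-(b^2)/2) ≤ Real.exp (-(a^2)/2) := by
    apply Real.exp_le_exp.2; nlinarith
  have h0 : (0:ℝ) ≤ (Real.sqrt (2 * Real.pi))⁻¹ := by positivity
  exact mul_le_mul_of_nonneg_left this h0

/-- Gaussian tail lower bound: for `x ≥ 1`, `1 - Φ(x) ≥ e^{-3/2} φ(x) / x`. -/
lemma tail_lb {x : ℝ} (hx : 1 ≤ x) :
    Real.exp (-(3/2)) * stdPdf x / x ≤ 1 - Phi x := by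
  have hx0 : 0 < x := lt_of_lt_of_le one_pos hx
  have h1 : 1 - Phi x = ∫ y in Set.Ioi x, stdPdf y := by
    have := Phi_add_tail x; linarith
  have h2 : ∫ y in Set.Ioc x (x + x⁻¹), stdPdf y ≤ ∫ y in Set.Ioi x, stdPdf y := by
    apply setIntegral_mono_set integrable_stdPdf.integrableOn
      (Filter.Eventually.of_forall fun y => (stdPdf_pos y).le)
      (HasSubset.Subset.eventuallyLE Set.Ioc_subset_Ioi_self)
  have h3 : ∫ y in Set.Ioc x (x + x⁻¹), stdPdf (x + x⁻¹) ≤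
      ∫ y in Set.Ioc x (x + x⁻¹), stdPdf y := by
    apply setIntegral_mono_on
      (integrableOn_const measure_Ioc_lt_top.ne)
      integrable_stdPdf.integrableOn measurableSet_Ioc
    intro y hy
    exact stdPdf_anti (by linarith [hy.1] : (0:ℝ) ≤ y) hy.2
  have h4 : (∫ y in Set.Ioc x (x + x⁻¹), stdPdf (x + x⁻¹)) = x⁻¹ * stdPdf (x + x⁻¹) := by
    rw [setIntegral_const, measureReal_def, Real.volume_Ioc]
    rw [ENNReal.toReal_ofReal (by linarith [inv_pos.2 hx0] : (0:ℝ) ≤ x + x⁻¹ - x)]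
    rw [smul_eq_mul]; ring_nf
  have h5 : Real.exp (-(3/2)) * stdPdf x ≤ stdPdf (x + x⁻¹) := by
    unfold stdPdf
    rw [← mul_assoc, mul_comm (Real.exp (-(3/2))), mul_assoc, ← Real.exp_add]
    have hinv : x⁻¹ ≤ 1 := by
      rw [inv_le_one_iff₀]; right; exact hx
    have h7 : -(3 / 2) + -(x ^ 2) / 2 ≤ -((x + x⁻¹) ^ 2) / 2 := by
      have hxx : x * x⁻¹ = 1 := mul_inv_cancel₀ hx0.ne'
      nlinarith [sq_nonneg x⁻¹, inv_pos.2 hx0]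
    have h0 : (0:ℝ) ≤ (Real.sqrt (2 * Real.pi))⁻¹ := by positivity
    exact mul_le_mul_of_nonneg_left (Real.exp_le_exp.2 h7) h0
  rw [h1, div_le_iff₀ hx0]
  calc Real.exp (-(3/2)) * stdPdf x ≤ stdPdf (x + x⁻¹) := h5
    _ = (x⁻¹ * stdPdf (x + x⁻¹)) * x := by
        field_simp
    _ ≤ (∫ y in Set.Ioi x, stdPdf y) * x := by
        apply mul_le_mul_of_nonneg_right _ hx0.le
        rw [← h4]; exact le_trans h3 h2


lemma exp_quad {s : ℝ} (h0 : 0 ≤ s) (h1 : s ≤ 1) : Real.exp s ≤ 1 + s + s ^ 2 := by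
  have h := Real.exp_bound (x := s) (by rw [abs_of_nonneg h0]; exact h1) (by norm_num : 0 < 2)
  simp only [Finset.sum_range_succ, Finset.sum_range_zero] at h
  norm_num at h
  have := abs_le.1 h
  nlinarith [this.2]

lemma exp_quad_neg {s : ℝ} (h0 : 0 ≤ s) (h1 : s ≤ 1) : Real.exp (-s) ≤ 1 - s + s ^ 2 := by
  have h := Real.exp_bound (x := -s) (by rw [abs_neg, abs_of_nonneg h0]; exact h1)
    (by norm_num : 0 < 2)
  simp only [Finset.sum_range_succ, Finset.sum_range_zero] at h
  norm_num at h
  have := abs_le.1 h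
  nlinarith [this.2]

section Chernoff

variable {Ω : Type} [MeasurableSpace Ω] {Q : Measure Ω} [IsProbabilityMeasure Q]
variable {n : ℕ} {U : Fin n → Ω → ℝ}

/-- The family of indicator variables `1{U i > p}`. -/
private def Yf (U : Fin n → Ω → ℝ) (p : ℝ) : Fin n → Ω → ℝ :=
  fun i => (fun x : ℝ => if p < x then (1 : ℝ) else 0) ∘ U i

lemma Yf_meas (hiid : IIDWithCdf Q U unifCdf) (p : ℝ) (i : Fin n) : Measurable (Yf U p i) := by
  exact (Measurable.ite measurableSet_Ioi measurable_const measurable_const).comp (hiid.1 i)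

lemma Yf_indep (hiid : IIDWithCdf Q U unifCdf) (p : ℝ) :
    iIndepFun (Yf U p) Q :=
  hiid.2.1.comp _ (fun _ => Measurable.ite measurableSet_Ioi measurable_const measurable_const)

lemma Yf_exp_eq (p : ℝ) (i : Fin n) (s : ℝ) :
    (fun ω => Real.exp (s * Yf U p i ω)) =
      fun ω => (U i ⁻¹' Set.Ioi p).indicator (fun _ => Real.exp s - 1) ω + 1 := by
  funext ω
  by_cases h : p < U i ω
  · rw [Set.indicator_of_mem (show ω ∈ U i ⁻¹' Set.Ioi p from h), Yf]
    simp only [Function.comp_apply, if_pos h, mul_one]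
    ring
  · rw [Set.indicator_of_notMem (show ω ∉ U i ⁻¹' Set.Ioi p from h), Yf]
    simp only [Function.comp_apply, if_neg h, mul_zero, Real.exp_zero]
    ring

lemma Yf_exp_integrable (hiid : IIDWithCdf Q U unifCdf) (p : ℝ) (i : Fin n) (s : ℝ) :
    Integrable (fun ω => Real.exp (s * Yf U p i ω)) Q := by
  rw [Yf_exp_eq]
  exact ((integrable_const _).indicator ((hiid.1 i) measurableSet_Ioi)).add (integrable_const 1)

lemma measure_gt (hiid : IIDWithCdf Q U unifCdf) {p : ℝ} (hp0 : 0 ≤ p) (hp1 : p ≤ 1)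
    (i : Fin n) : (Q (U i ⁻¹' Set.Ioi p)).toReal = 1 - p := by
  have hucdf : unifCdf p = p := by
    unfold unifCdf; rw [min_eq_left hp1, max_eq_right hp0]
  have hm : MeasurableSet (U i ⁻¹' Set.Iic p) := (hiid.1 i) measurableSet_Iic
  have hc : U i ⁻¹' Set.Ioi p = (U i ⁻¹' Set.Iic p)ᶜ := by
    ext ω; simp [not_le]
  have hmeasIic : Q (U i ⁻¹' Set.Iic p) = ENNReal.ofReal p := by
    have := hiid.2.2 i p
    rw [hucdf] at this
    exact this
  rw [hc, measure_compl hm (measure_ne_top Q _), hmeasIic, measure_univ]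
  rw [ENNReal.toReal_sub_of_le (ENNReal.ofReal_le_one.2 hp1) ENNReal.one_ne_top]
  rw [ENNReal.toReal_one, ENNReal.toReal_ofReal hp0]

lemma Yf_mgf (hiid : IIDWithCdf Q U unifCdf) {p : ℝ} (hp0 : 0 ≤ p) (hp1 : p ≤ 1)
    (i : Fin n) (s : ℝ) :
    mgf (Yf U p i) Q s = (1 - p) * (Real.exp s - 1) + 1 := by
  have hA : MeasurableSet (U i ⁻¹' Set.Ioi p) := (hiid.1 i) measurableSet_Ioi
  show (∫ ω, Real.exp (s * Yf U p i ω) ∂Q) = _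
  rw [Yf_exp_eq]
  rw [integral_add ((integrable_const _).indicator hA) (integrable_const 1)]
  rw [integral_indicator_const _ hA, integral_const, measureReal_def, measureReal_def, measure_univ]
  rw [measure_gt hiid hp0 hp1 i]
  simp [mul_comm]

lemma Yf_mgf_sum_le (hiid : IIDWithCdf Q U unifCdf) {p : ℝ} (hp0 : 0 ≤ p) (hp1 : p ≤ 1)
    (s : ℝ) :
    mgf (∑ i, Yf U p i) Q s ≤ Real.exp ((n : ℝ) * (1 - p) * (Real.exp s - 1)) := by
  rw [(Yf_indep hiid p).mgf_sum (Yf_meas hiid p) Finset.univ]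
  have hterm : ∀ i : Fin n, mgf (Yf U p i) Q s = (1 - p) * (Real.exp s - 1) + 1 :=
    fun i => Yf_mgf hiid hp0 hp1 i s
  calc (∏ i, mgf (Yf U p i) Q s) = ((1 - p) * (Real.exp s - 1) + 1) ^ n := by
        rw [Finset.prod_congr rfl (fun i _ => hterm i), Finset.prod_const, Finset.card_univ,
          Fintype.card_fin]
    _ ≤ Real.exp ((1 - p) * (Real.exp s - 1)) ^ n := by
        apply pow_le_pow_left₀ _ (Real.add_one_le_exp _)
        nlinarith [Real.exp_pos s, hp1, hp0]
    _ = Real.exp ((n : ℝ) * ((1 - p) * (Real.exp s - 1))) := (Real.exp_nat_mul _ n).symm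
    _ = Real.exp ((n : ℝ) * (1 - p) * (Real.exp s - 1)) := by ring_nf

lemma Yf_sum_apply (p : ℝ) (ω : Ω) :
    (∑ i, Yf U p i) ω = ∑ i, (if p < U i ω then (1 : ℝ) else 0) := by
  rw [Finset.sum_apply]
  rfl

lemma Yf_sum_integrable (hiid : IIDWithCdf Q U unifCdf) (p s : ℝ) :
    Integrable (fun ω => Real.exp (s * (∑ i, Yf U p i) ω)) Q :=
  (Yf_indep hiid p).integrable_exp_mul_sum (Yf_meas hiid p)
    (fun i _ => Yf_exp_integrable hiid p i s)

lemma tail_upper (hiid : IIDWithCdf Q U unifCdf) {p : ℝ} (hp0 : 0 ≤ p) (hp1 : p ≤ 1)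
    {s : ℝ} (hs : 0 ≤ s) (x : ℝ) :
    Q {ω | (n : ℝ) * (1 - p) + x ≤ ∑ i, (if p < U i ω then (1 : ℝ) else 0)} ≤
      ENNReal.ofReal (Real.exp ((n : ℝ) * (1 - p) * (Real.exp s - 1 - s) - s * x)) := by
  have hset : {ω | (n : ℝ) * (1 - p) + x ≤ ∑ i, (if p < U i ω then (1 : ℝ) else 0)} =
      {ω | (n : ℝ) * (1 - p) + x ≤ (∑ i, Yf U p i) ω} := by
    ext ω; rw [Set.mem_setOf_eq, Set.mem_setOf_eq, Yf_sum_apply]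
  rw [hset]
  have h := measure_ge_le_exp_mul_mgf (μ := Q) (X := ∑ i, Yf U p i)
    ((n : ℝ) * (1 - p) + x) hs (Yf_sum_integrable hiid p s)
  have h2 : Real.exp (-s * ((n : ℝ) * (1 - p) + x)) * mgf (∑ i, Yf U p i) Q s ≤
      Real.exp ((n : ℝ) * (1 - p) * (Real.exp s - 1 - s) - s * x) := by
    calc Real.exp (-s * ((n : ℝ) * (1 - p) + x)) * mgf (∑ i, Yf U p i) Q s ≤
        Real.exp (-s * ((n : ℝ) * (1 - p) + x)) *
          Real.exp ((n : ℝ) * (1 - p) * (Real.exp s - 1)) :=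
          mul_le_mul_of_nonneg_left (Yf_mgf_sum_le hiid hp0 hp1 s) (Real.exp_pos _).le
      _ = Real.exp ((n : ℝ) * (1 - p) * (Real.exp s - 1 - s) - s * x) := by
          rw [← Real.exp_add]; ring_nf
  have hfin : Q {ω | (n : ℝ) * (1 - p) + x ≤ (∑ i, Yf U p i) ω} ≠ ⊤ := measure_ne_top _ _
  rw [← ENNReal.ofReal_toReal hfin]
  exact ENNReal.ofReal_le_ofReal (le_trans h h2)

lemma tail_lower (hiid : IIDWithCdf Q U unifCdf) {p : ℝ} (hp0 : 0 ≤ p) (hp1 : p ≤ 1)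
    {s : ℝ} (hs : 0 ≤ s) (x : ℝ) :
    Q {ω | ∑ i, (if p < U i ω then (1 : ℝ) else 0) ≤ (n : ℝ) * (1 - p) - x} ≤
      ENNReal.ofReal (Real.exp ((n : ℝ) * (1 - p) * (Real.exp (-s) - 1 + s) - s * x)) := by
  have hset : {ω | ∑ i, (if p < U i ω then (1 : ℝ) else 0) ≤ (n : ℝ) * (1 - p) - x} =
      {ω | (∑ i, Yf U p i) ω ≤ (n : ℝ) * (1 - p) - x} := by
    ext ω; rw [Set.mem_setOf_eq, Set.mem_setOf_eq, Yf_sum_apply]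
  rw [hset]
  have h := measure_le_le_exp_mul_mgf (μ := Q) (X := ∑ i, Yf U p i) (t := -s)
    ((n : ℝ) * (1 - p) - x) (neg_nonpos.2 hs) (Yf_sum_integrable hiid p (-s))
  have h2 : Real.exp (-(-s) * ((n : ℝ) * (1 - p) - x)) * mgf (∑ i, Yf U p i) Q (-s) ≤
      Real.exp ((n : ℝ) * (1 - p) * (Real.exp (-s) - 1 + s) - s * x) := by
    calc Real.exp (-(-s) * ((n : ℝ) * (1 - p) - x)) * mgf (∑ i, Yf U p i) Q (-s) ≤
        Real.exp (-(-s) * ((n : ℝ) * (1 - p) - x)) *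
          Real.exp ((n : ℝ) * (1 - p) * (Real.exp (-s) - 1)) :=
          mul_le_mul_of_nonneg_left (Yf_mgf_sum_le hiid hp0 hp1 (-s)) (Real.exp_pos _).le
      _ = Real.exp ((n : ℝ) * (1 - p) * (Real.exp (-s) - 1 + s) - s * x) := by
          rw [← Real.exp_add]; ring_nf
  have hfin : Q {ω | (∑ i, Yf U p i) ω ≤ (n : ℝ) * (1 - p) - x} ≠ ⊤ := measure_ne_top _ _
  rw [← ENNReal.ofReal_toReal hfin]
  exact ENNReal.ofReal_le_ofReal (le_trans h h2)

end Chernoff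

section PointBound

variable {Ω : Type} [MeasurableSpace Ω] {Q : Measure Ω} [IsProbabilityMeasure Q]
variable {n : ℕ} {U : Fin n → Ω → ℝ}

lemma pointBound (hiid : IIDWithCdf Q U unifCdf) (hn : 0 < n) {p : ℝ} (hp : 1/2 ≤ p)
    (hp1 : p < 1) {y : ℝ} (hy : 0 ≤ y) :
    Q {ω | y ≤ |empCdf n (fun i => U i ω) p - p|} ≤
      ENNReal.ofReal (2 * Real.exp
        (-(min (((n:ℝ)*y)^2/(4*(n:ℝ)*(1-p))) ((n:ℝ)*y/4)))) := by
  have hp0 : (0:ℝ) ≤ p := by linarith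
  have hp1' : p ≤ 1 := hp1.le
  have hq0 : (0:ℝ) < 1 - p := by linarith
  have hn0 : (0:ℝ) < (n:ℝ) := by exact_mod_cast hn
  set v : ℝ := (n:ℝ) * (1 - p) with hvdef
  set x : ℝ := (n:ℝ) * y with hxdef
  have hv0 : 0 < v := mul_pos hn0 hq0
  have hx0 : 0 ≤ x := mul_nonneg hn0.le hy
  set M : ℝ := min (((n:ℝ)*y)^2/(4*(n:ℝ)*(1-p))) ((n:ℝ)*y/4) with hMdef
  have hM1 : M ≤ x^2/(4*v) := by
    have : x^2/(4*v) = ((n:ℝ)*y)^2/(4*(n:ℝ)*(1-p)) := by rw [hxdef, hvdef]; ring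
    rw [this]; exact min_le_left _ _
  have hM2 : M ≤ x/4 := min_le_right _ _
  have hkey : ∀ ω : Ω, empCdf n (fun i => U i ω) p - p =
      (v - ∑ i, (if p < U i ω then (1:ℝ) else 0)) / n := by
    intro ω
    unfold empCdf
    have hsum : (∑ i, if U i ω ≤ p then (1:ℝ) else 0) =
        (n:ℝ) - ∑ i, (if p < U i ω then (1:ℝ) else 0) := by
      rw [eq_sub_iff_add_eq, ← Finset.sum_add_distrib]
      have hone : ∀ i : Fin n,
          (if U i ω ≤ p then (1:ℝ) else 0) + (if p < U i ω then (1:ℝ) else 0) = 1 := by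
        intro i; by_cases h : U i ω ≤ p
        · rw [if_pos h, if_neg (not_lt.2 h)]; ring
        · rw [if_neg h, if_pos (not_le.1 h)]; ring
      rw [Finset.sum_congr rfl (fun i _ => hone i), Finset.sum_const, Finset.card_univ,
        Fintype.card_fin, nsmul_eq_mul, mul_one]
    rw [hsum]
    field_simp
    ring
  have hev : {ω | y ≤ |empCdf n (fun i => U i ω) p - p|} =
      {ω | x ≤ |(∑ i, (if p < U i ω then (1:ℝ) else 0)) - v|} := by
    ext ω
    rw [Set.mem_setOf_eq, Set.mem_setOf_eq, hkey ω, abs_div, abs_of_pos hn0,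
      le_div_iff₀ hn0, abs_sub_comm, hxdef, mul_comm]
  rw [hev]
  have hsub : {ω | x ≤ |(∑ i, (if p < U i ω then (1:ℝ) else 0)) - v|} ⊆
      {ω | (∑ i, (if p < U i ω then (1:ℝ) else 0)) ≤ v - x} ∪
      {ω | v + x ≤ ∑ i, (if p < U i ω then (1:ℝ) else 0)} := by
    intro ω hω
    rw [Set.mem_setOf_eq] at hω
    rcases le_abs.1 hω with h | h
    · right; rw [Set.mem_setOf_eq]; linarith
    · left; rw [Set.mem_setOf_eq]; linarith
  refine le_trans (measure_mono hsub) (le_trans (measure_union_le _ _) ?_)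
  have hexp2 : ENNReal.ofReal (Real.exp (-M)) + ENNReal.ofReal (Real.exp (-M)) =
      ENNReal.ofReal (2 * Real.exp (-M)) := by
    rw [← ENNReal.ofReal_add (Real.exp_pos _).le (Real.exp_pos _).le]; ring_nf
  by_cases hxv : x ≤ v
  · -- moderate deviations: s = x/(2v)
    set s : ℝ := x/(2*v) with hsdef
    have hs0 : 0 ≤ s := div_nonneg hx0 (by linarith)
    have hs1 : s ≤ 1 := by
      rw [hsdef, div_le_one (by linarith)]; linarith
    have hvs2 : v * s^2 = x^2/(4*v) := by
      rw [hsdef]; field_simp; ring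
    have hsx : s * x = x^2/(2*v) := by
      rw [hsdef]; field_simp
    have hup : v * (Real.exp s - 1 - s) - s * x ≤ -M := by
      have := exp_quad hs0 hs1
      have h1 : v * (Real.exp s - 1 - s) ≤ v * s^2 := by nlinarith
      rw [hvs2] at h1
      rw [hsx] at *
      have hrel : x^2/(2*v) = 2*(x^2/(4*v)) := by field_simp; ring
      linarith [hM1]
    have hlo : v * (Real.exp (-s) - 1 + s) - s * x ≤ -M := by
      have := exp_quad_neg hs0 hs1
      have h1 : v * (Real.exp (-s) - 1 + s) ≤ v * s^2 := by nlinarith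
      rw [hvs2] at h1
      rw [hsx] at *
      have hrel : x^2/(2*v) = 2*(x^2/(4*v)) := by field_simp; ring
      linarith [hM1]
    have hQup := le_trans (tail_upper hiid hp0 hp1' hs0 x)
      (ENNReal.ofReal_le_ofReal (Real.exp_le_exp.2 hup))
    have hQlo := le_trans (tail_lower hiid hp0 hp1' hs0 x)
      (ENNReal.ofReal_le_ofReal (Real.exp_le_exp.2 hlo))
    calc Q {ω | (∑ i, (if p < U i ω then (1:ℝ) else 0)) ≤ v - x} +
        Q {ω | v + x ≤ ∑ i, (if p < U i ω then (1:ℝ) else 0)} ≤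
        ENNReal.ofReal (Real.exp (-M)) + ENNReal.ofReal (Real.exp (-M)) :=
          add_le_add hQlo hQup
      _ = ENNReal.ofReal (2 * Real.exp (-M)) := hexp2
  · -- large deviations: s = 1, lower tail empty
    push_neg at hxv
    have hempty : {ω | (∑ i, (if p < U i ω then (1:ℝ) else 0)) ≤ v - x} = ∅ := by
      ext ω
      simp only [Set.mem_setOf_eq, Set.mem_empty_iff_false, iff_false, not_le]
      have hSnn : (0:ℝ) ≤ ∑ i, (if p < U i ω then (1:ℝ) else 0) :=
        Finset.sum_nonneg fun i _ => by positivity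
      linarith
    have hup : v * (Real.exp 1 - 1 - 1) - 1 * x ≤ -M := by
      have he1 : Real.exp 1 < 2.7182818286 := Real.exp_one_lt_d9
      have he2 : (2.7182818283 : ℝ) < Real.exp 1 := Real.exp_one_gt_d9
      have h1 : v * (Real.exp 1 - 2) ≤ x * (Real.exp 1 - 2) := by nlinarith
      have h2 : x * (Real.exp 1 - 2) - x ≤ -(x/4) := by nlinarith
      nlinarith [hM2]
    have hQup := le_trans (tail_upper hiid hp0 hp1' zero_le_one x)
      (ENNReal.ofReal_le_ofReal (Real.exp_le_exp.2 hup))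
    calc Q {ω | (∑ i, (if p < U i ω then (1:ℝ) else 0)) ≤ v - x} +
        Q {ω | v + x ≤ ∑ i, (if p < U i ω then (1:ℝ) else 0)} =
        0 + Q {ω | v + x ≤ ∑ i, (if p < U i ω then (1:ℝ) else 0)} := by
          rw [hempty, measure_empty]
      _ ≤ 0 + ENNReal.ofReal (Real.exp (-M)) := by exact add_le_add le_rfl hQup
      _ ≤ ENNReal.ofReal (2 * Real.exp (-M)) := by
          rw [zero_add]
          exact ENNReal.ofReal_le_ofReal (by nlinarith [Real.exp_pos (-M)])

end PointBound

section Discretize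

/-- grid point `k` for the discretization of `[1/2, Φ(√(2 log n))]` into `n²` pieces. -/
def gp (n : ℕ) (k : ℕ) : ℝ :=
  1/2 + (k : ℝ) * ((Phi (Real.sqrt (2 * Real.log n)) - 1/2) / ((n^2 : ℕ) : ℝ))

lemma empCdf_mono {n : ℕ} (X : Fin n → ℝ) {t t' : ℝ} (h : t ≤ t') :
    empCdf n X t ≤ empCdf n X t' := by
  unfold empCdf
  apply mul_le_mul_of_nonneg_left _ (by positivity)
  apply Finset.sum_le_sum
  intro i _
  by_cases hi : X i ≤ t
  · rw [if_pos hi, if_pos (le_trans hi h)]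
  · rw [if_neg hi]
    by_cases hi' : X i ≤ t'
    · rw [if_pos hi']; norm_num
    · rw [if_neg hi']

lemma gridfind {a b t : ℝ} {m : ℕ} (hm : 0 < m) (h1 : a ≤ t) (h2 : t ≤ b) :
    ∃ j : ℕ, j < m ∧ a + (j : ℝ) * ((b - a)/(m : ℝ)) ≤ t ∧
      t ≤ a + ((j : ℝ) + 1) * ((b - a)/(m : ℝ)) := by
  have hm0 : (0:ℝ) < (m:ℝ) := by exact_mod_cast hm
  set δ : ℝ := (b - a)/(m : ℝ) with hδdef
  have hδ0 : 0 ≤ δ := div_nonneg (by linarith) hm0.le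
  by_cases hδ : δ = 0
  · refine ⟨0, hm, ?_, ?_⟩
    · rw [hδ]; simpa using h1
    · have hba : b - a = 0 := by
        have := hδ
        rw [hδdef, div_eq_zero_iff] at this
        rcases this with h | h
        · exact h
        · exact absurd h hm0.ne'
      rw [hδ]; simp; linarith
  · have hδpos : 0 < δ := lt_of_le_of_ne hδ0 (Ne.symm hδ)
    set u : ℝ := (t - a)/δ with hudef
    have hu0 : 0 ≤ u := div_nonneg (by linarith) hδpos.le
    have huδ : u * δ = t - a := div_mul_cancel₀ _ hδ
    have hum : u ≤ (m : ℝ) := by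
      rw [hudef, div_le_iff₀ hδpos, hδdef]
      have : (m:ℝ) * ((b-a)/(m:ℝ)) = b - a := by field_simp
      rw [this]; linarith
    refine ⟨min (Nat.floor u) (m-1), lt_of_le_of_lt (min_le_right _ _) (Nat.sub_lt hm one_pos),
      ?_, ?_⟩
    · have hju : ((min (Nat.floor u) (m-1) : ℕ) : ℝ) ≤ u := by
        calc ((min (Nat.floor u) (m-1) : ℕ) : ℝ) ≤ ((Nat.floor u : ℕ) : ℝ) := by
              exact_mod_cast min_le_left _ _
          _ ≤ u := Nat.floor_le hu0
      nlinarith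
    · have hju : u ≤ ((min (Nat.floor u) (m-1) : ℕ) : ℝ) + 1 := by
        rcases le_or_gt (Nat.floor u) (m-1) with h | h
        · rw [min_eq_left h]
          exact (Nat.lt_floor_add_one u).le
        · rw [min_eq_right h.le]
          have hmm : ((m - 1 : ℕ) : ℝ) + 1 = (m : ℝ) := by
            have h1m : (1:ℕ) ≤ m := hm
            push_cast [Nat.cast_sub h1m]
            ring
          rw [hmm]; exact hum
      nlinarith

lemma gp_le {n : ℕ} (hn : 0 < n) (hhalf : 1/2 ≤ Phi (Real.sqrt (2 * Real.log n)))
    {k : ℕ} (hk : k ≤ n^2) : gp n k ≤ Phi (Real.sqrt (2 * Real.log n)) := by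
  have hm0 : (0:ℝ) < ((n^2 : ℕ) : ℝ) := by positivity
  unfold gp
  have h1 : (k : ℝ) * ((Phi (Real.sqrt (2 * Real.log n)) - 1/2) / ((n^2 : ℕ) : ℝ)) ≤
      ((n^2 : ℕ) : ℝ) * ((Phi (Real.sqrt (2 * Real.log n)) - 1/2) / ((n^2 : ℕ) : ℝ)) := by
    apply mul_le_mul_of_nonneg_right (by exact_mod_cast hk)
    exact div_nonneg (by linarith) hm0.le
  have h2 : ((n^2 : ℕ) : ℝ) * ((Phi (Real.sqrt (2 * Real.log n)) - 1/2) / ((n^2 : ℕ) : ℝ)) =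
      Phi (Real.sqrt (2 * Real.log n)) - 1/2 := by field_simp
  linarith

lemma half_le_gp {n : ℕ} (hhalf : 1/2 ≤ Phi (Real.sqrt (2 * Real.log n))) (k : ℕ) :
    1/2 ≤ gp n k := by
  unfold gp
  have : (0:ℝ) ≤ (k : ℝ) * ((Phi (Real.sqrt (2 * Real.log n)) - 1/2) / ((n^2 : ℕ) : ℝ)) := by
    apply mul_nonneg (Nat.cast_nonneg k)
    apply div_nonneg (by linarith) (Nat.cast_nonneg _)
  linarith

lemma discretize {n : ℕ} (hn : 0 < n) (X : Fin n → ℝ) {lam : ℝ} (hlam : 0 < lam)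
    (hq : (Phi (Real.sqrt (2 * Real.log n)) - 1/2)/((n^2:ℕ):ℝ) ≤
      1 - Phi (Real.sqrt (2 * Real.log n)))
    (hδs : Real.sqrt n * ((Phi (Real.sqrt (2 * Real.log n)) - 1/2)/((n^2:ℕ):ℝ)) ≤
      (lam/8) * Real.sqrt ((1 - Phi (Real.sqrt (2 * Real.log n)))/2))
    (hT1 : Phi (Real.sqrt (2 * Real.log n)) < 1)
    (hW : lam ≤ WnPlus n X) :
    ∃ k : ℕ, k ≤ n^2 ∧
      (lam/16) * Real.sqrt ((1 - gp n k) / n) ≤ |empCdf n X (gp n k) - gp n k| := by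
  set T : ℝ := Phi (Real.sqrt (2 * Real.log n)) with hTdef
  have hhalf : 1/2 ≤ T := half_le_Phi (Real.sqrt_nonneg _)
  set δ : ℝ := (T - 1/2)/((n^2:ℕ):ℝ) with hδdef
  have hm0 : (0:ℝ) < ((n^2 : ℕ) : ℝ) := by positivity
  have hδ0 : 0 ≤ δ := div_nonneg (by linarith) hm0.le
  -- extract a point t with large weighted deviation
  have hne : ((fun t => Real.sqrt n * |empCdf n X t - t| / Real.sqrt (t * (1 - t))) ''
      (Set.Icc (1/2) T)).Nonempty :=
    ⟨_, Set.mem_image_of_mem _ (Set.mem_Icc.2 ⟨le_rfl, hhalf⟩)⟩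
  have hlt : lam/2 < WnPlus n X := by linarith
  obtain ⟨y, hy, hylt⟩ := exists_lt_of_lt_csSup hne (by rw [WnPlus] at hlt; exact hlt)
  obtain ⟨t, ht, rfl⟩ := hy
  rw [Set.mem_Icc] at ht
  have ht1 : 1/2 ≤ t := ht.1
  have ht2 : t ≤ T := ht.2
  have htw : 0 < t * (1 - t) := by nlinarith [hT1]
  have htws : 0 < Real.sqrt (t * (1 - t)) := Real.sqrt_pos.2 htw
  have hylt' : lam/2 < Real.sqrt n * |empCdf n X t - t| / Real.sqrt (t * (1 - t)) := hylt
  have hdev : lam/2 * Real.sqrt (t * (1 - t)) < Real.sqrt n * |empCdf n X t - t| :=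
    (lt_div_iff₀ htws).1 hylt'
  -- find grid interval
  obtain ⟨j, hjm, hj1, hj2⟩ := gridfind (a := 1/2) (b := T) (m := n^2) (by positivity) ht1 ht2
  have hgpj : gp n j = 1/2 + (j:ℝ) * δ := rfl
  have hgpj1 : gp n (j+1) = 1/2 + ((j:ℝ)+1) * δ := by
    unfold gp; rw [hδdef]; push_cast; ring
  have hsj1 : gp n j ≤ t := by rw [hgpj]; exact hj1
  have hsj2 : t ≤ gp n (j+1) := by rw [hgpj1]; exact hj2
  have hjm' : j + 1 ≤ n^2 := hjm
  have hgpjT : gp n (j+1) ≤ T := gp_le hn hhalf hjm'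
  have hgpjh : 1/2 ≤ gp n (j+1) := half_le_gp hhalf _
  have hgpjh' : 1/2 ≤ gp n j := half_le_gp hhalf _
  set q1 : ℝ := 1 - gp n (j+1) with hq1def
  have hq1T : 1 - T ≤ q1 := by rw [hq1def]; linarith
  have hq10 : 0 < q1 := by rw [hq1def]; linarith
  -- weight comparison
  have hw1 : q1/2 ≤ t * (1 - t) := by
    have e1 : gp n (j+1) * (1 - gp n (j+1)) ≤ t * (1 - t) := by nlinarith
    have e2 : q1/2 ≤ gp n (j+1) * (1 - gp n (j+1)) := by rw [hq1def]; nlinarith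
    linarith
  have hwsqrt : Real.sqrt (q1/2) ≤ Real.sqrt (t * (1 - t)) := Real.sqrt_le_sqrt hw1
  -- deviation transferred to endpoints
  have hVj : empCdf n X (gp n j) ≤ empCdf n X t := empCdf_mono X hsj1
  have hVj1 : empCdf n X t ≤ empCdf n X (gp n (j+1)) := empCdf_mono X hsj2
  have hstep : gp n (j+1) - gp n j = δ := by rw [hgpj, hgpj1]; ring
  have habs : |empCdf n X t - t| ≤ |empCdf n X (gp n j) - gp n j| +
      |empCdf n X (gp n (j+1)) - gp n (j+1)| + δ := by
    rw [abs_sub_le_iff]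
    constructor
    · have := le_abs_self (empCdf n X (gp n (j+1)) - gp n (j+1))
      have h0 := abs_nonneg (empCdf n X (gp n j) - gp n j)
      linarith
    · have := le_abs_self (gp n j - empCdf n X (gp n j))
      rw [abs_sub_comm] at this
      have h0 := abs_nonneg (empCdf n X (gp n (j+1)) - gp n (j+1))
      linarith
  have hδb : Real.sqrt n * δ ≤ (lam/8) * Real.sqrt (q1/2) := by
    apply le_trans hδs
    apply mul_le_mul_of_nonneg_left _ (by linarith)
    apply Real.sqrt_le_sqrt
    linarith
  have hsn0 : (0:ℝ) ≤ Real.sqrt n := Real.sqrt_nonneg _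
  have hsum : (3*lam/8) * Real.sqrt (q1/2) ≤
      Real.sqrt n * |empCdf n X (gp n j) - gp n j| +
      Real.sqrt n * |empCdf n X (gp n (j+1)) - gp n (j+1)| := by
    have h1 : Real.sqrt n * |empCdf n X t - t| ≤
        Real.sqrt n * (|empCdf n X (gp n j) - gp n j| +
          |empCdf n X (gp n (j+1)) - gp n (j+1)| + δ) :=
      mul_le_mul_of_nonneg_left habs hsn0
    have h2 : (lam/2) * Real.sqrt (q1/2) ≤ (lam/2) * Real.sqrt (t*(1-t)) :=
      mul_le_mul_of_nonneg_left hwsqrt (by linarith)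
    nlinarith
  -- pick the better endpoint
  have hmain : ∀ k : ℕ, k ≤ n^2 → 1 - gp n k ≤ 2*q1 →
      (3*lam/16) * Real.sqrt (q1/2) ≤ Real.sqrt n * |empCdf n X (gp n k) - gp n k| →
      (lam/16) * Real.sqrt ((1 - gp n k) / n) ≤ |empCdf n X (gp n k) - gp n k| := by
    intro k hk hqk hdevk
    have hgk1 : 0 ≤ 1 - gp n k := by
      have := gp_le hn hhalf hk
      rw [← hTdef] at this
      linarith
    have hq2 : Real.sqrt (1 - gp n k) ≤ 3 * Real.sqrt (q1/2) := by
      calc Real.sqrt (1 - gp n k) ≤ Real.sqrt (2*q1) := Real.sqrt_le_sqrt hqk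
        _ ≤ 3 * Real.sqrt (q1/2) := by
          rw [show (3:ℝ) = Real.sqrt 9 by
            rw [show (9:ℝ) = 3^2 by norm_num, Real.sqrt_sq (by norm_num)]]
          rw [← Real.sqrt_mul (by norm_num)]
          apply Real.sqrt_le_sqrt; linarith
    have hn0' : (0:ℝ) < (n:ℝ) := by exact_mod_cast hn
    have hsn : 0 < Real.sqrt n := Real.sqrt_pos.2 hn0'
    rw [Real.sqrt_div hgk1, ← mul_div_assoc, div_le_iff₀ hsn]
    calc lam/16 * Real.sqrt (1 - gp n k) ≤ lam/16 * (3 * Real.sqrt (q1/2)) :=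
          mul_le_mul_of_nonneg_left hq2 (by linarith)
      _ = (3*lam/16) * Real.sqrt (q1/2) := by ring
      _ ≤ Real.sqrt n * |empCdf n X (gp n k) - gp n k| := hdevk
      _ = |empCdf n X (gp n k) - gp n k| * Real.sqrt n := by ring
  rcases le_or_gt (Real.sqrt n * |empCdf n X (gp n (j+1)) - gp n (j+1)|)
      (Real.sqrt n * |empCdf n X (gp n j) - gp n j|) with hcase | hcase
  · refine ⟨j, le_of_lt hjm, hmain j (le_of_lt hjm) ?_ ?_⟩
    · have : 1 - gp n j = q1 + δ := by rw [hq1def, hstep.symm]; ring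
      rw [this]; linarith
    · linarith
  · refine ⟨j+1, hjm', hmain (j+1) hjm' (by linarith) ?_⟩
    linarith

end Discretize

section Final

/-- The constant in the Gaussian tail lower bound. -/
def Kc : ℝ := Real.exp (-(3/2 : ℝ)) / (Real.sqrt (2 * Real.pi) * Real.sqrt 2)

lemma Kc_pos : 0 < Kc := by
  unfold Kc
  positivity

lemma one_le_log {n : ℕ} (hn3 : 3 ≤ n) : 1 ≤ Real.log n := by
  have hn0 : (0:ℝ) < (n:ℝ) := by positivity
  rw [Real.le_log_iff_exp_le hn0]
  calc Real.exp 1 ≤ 2.7182818286 := Real.exp_one_lt_d9.le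
    _ ≤ 3 := by norm_num
    _ ≤ (n:ℝ) := by exact_mod_cast hn3

lemma qmin_lb {n : ℕ} (hn3 : 3 ≤ n) :
    Kc / ((n:ℝ) * Real.sqrt (Real.log n)) ≤ 1 - Phi (Real.sqrt (2 * Real.log n)) := by
  have hL1 : 1 ≤ Real.log n := one_le_log hn3
  have hn0 : (0:ℝ) < (n:ℝ) := by positivity
  set L : ℝ := Real.log n with hLdef
  have hx1 : 1 ≤ Real.sqrt (2 * L) := by
    rw [show (1:ℝ) = Real.sqrt 1 by rw [Real.sqrt_one]]
    apply Real.sqrt_le_sqrt; linarith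
  refine le_trans ?_ (tail_lb hx1)
  have hsq : Real.sqrt (2*L) ^ 2 = 2 * L := Real.sq_sqrt (by linarith)
  have hpdf : stdPdf (Real.sqrt (2*L)) = (Real.sqrt (2*Real.pi))⁻¹ * ((n:ℝ))⁻¹ := by
    unfold stdPdf
    rw [hsq]
    congr 1
    rw [show -(2*L)/2 = -L by ring, Real.exp_neg, hLdef, Real.exp_log hn0]
  rw [hpdf, Real.sqrt_mul (by norm_num : (0:ℝ) ≤ 2)]
  unfold Kc
  have h2π : 0 < Real.sqrt (2*Real.pi) := Real.sqrt_pos.2 (by positivity)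
  have h2 : 0 < Real.sqrt 2 := by positivity
  have hsL : 0 < Real.sqrt L := Real.sqrt_pos.2 (by linarith)
  rw [div_le_div_iff₀ (by positivity) (by positivity)]
  ring_nf
  rw [mul_comm]
  apply le_of_eq
  field_simp
  rw [Real.sqrt_mul (by norm_num : (0:ℝ) ≤ 2),
    Real.sqrt_mul' _ (by norm_num : (0:ℝ) ≤ 2)]; ring

lemma qmin_pos {n : ℕ} (hn3 : 3 ≤ n) : 0 < 1 - Phi (Real.sqrt (2 * Real.log n)) := by
  have hL1 : 1 ≤ Real.log n := one_le_log hn3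
  have hsL : 0 < Real.sqrt (Real.log n) := Real.sqrt_pos.2 (by linarith)
  have hn0 : (0:ℝ) < (n:ℝ) := by positivity
  refine lt_of_lt_of_le ?_ (qmin_lb hn3)
  exact div_pos Kc_pos (by positivity)

lemma sqrtlog_le_n {n : ℕ} (hn3 : 3 ≤ n) (h : (1/(2*Kc))^2 ≤ (n:ℝ)) :
    Real.sqrt (Real.log n) ≤ 2 * Kc * (n:ℝ) := by
  have hn0 : (0:ℝ) < (n:ℝ) := by positivity
  have hlog : Real.log n ≤ (n:ℝ) := (Real.log_le_sub_one_of_pos hn0).trans (by linarith)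
  have h1 : Real.sqrt (Real.log n) ≤ Real.sqrt n := Real.sqrt_le_sqrt hlog
  have h2 : 1/(2*Kc) ≤ Real.sqrt n := by
    have := Real.sqrt_le_sqrt h
    rwa [Real.sqrt_sq (one_div_nonneg.2 (by linarith [Kc_pos]))] at this
  have h3 : Real.sqrt n * Real.sqrt n = (n:ℝ) := Real.mul_self_sqrt hn0.le
  have hKc := Kc_pos
  have h5 := mul_le_mul_of_nonneg_left h2 (by linarith : (0:ℝ) ≤ 2*Kc)
  rw [mul_one_div, div_self (by linarith : (2*Kc) ≠ 0)] at h5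
  have h6 : Real.sqrt n ≤ 2*Kc*(n:ℝ) := by
    calc Real.sqrt n = 1 * Real.sqrt n := (one_mul _).symm
      _ ≤ (2*Kc*Real.sqrt n) * Real.sqrt n :=
          mul_le_mul_of_nonneg_right h5 (Real.sqrt_nonneg _)
      _ = 2*Kc*(n:ℝ) := by rw [mul_assoc, h3]
  linarith

/-- Condition (i) for discretize: the grid spacing is below `1 - T`. -/
lemma cond3_lemma {n : ℕ} (hn3 : 3 ≤ n) (hE2 : (1/(2*Kc))^2 ≤ (n:ℝ)) :
    (Phi (Real.sqrt (2 * Real.log n)) - 1/2)/((n^2:ℕ):ℝ) ≤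
      1 - Phi (Real.sqrt (2 * Real.log n)) := by
  have hKc := Kc_pos
  have hL1 : 1 ≤ Real.log n := one_le_log hn3
  have hnR : (0:ℝ) < (n:ℝ) := by positivity
  have hsL : 0 < Real.sqrt (Real.log n) := Real.sqrt_pos.2 (by linarith)
  have hm0 : (0:ℝ) < ((n^2:ℕ):ℝ) := by positivity
  have hmn : ((n^2:ℕ):ℝ) = (n:ℝ)^2 := by push_cast; ring
  have hE2' := sqrtlog_le_n hn3 hE2
  have hT1' := qmin_lb hn3
  have hTle1 : Phi (Real.sqrt (2 * Real.log n)) ≤ 1 := Phi_le_one _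
  have step : (Phi (Real.sqrt (2 * Real.log n)) - 1/2)/((n^2:ℕ):ℝ) ≤
      Kc / ((n:ℝ) * Real.sqrt (Real.log n)) := by
    rw [div_le_div_iff₀ hm0 (mul_pos hnR hsL), hmn]
    have ha : (0:ℝ) ≤ (n:ℝ)*Real.sqrt (Real.log n) := by positivity
    have hb : (Phi (Real.sqrt (2 * Real.log n)) - 1/2)*((n:ℝ)*Real.sqrt (Real.log n)) ≤
        (1/2)*((n:ℝ)*Real.sqrt (Real.log n)) :=
      mul_le_mul_of_nonneg_right (by linarith) ha
    have hcc : (n:ℝ)*Real.sqrt (Real.log n) ≤ (n:ℝ)*(2*Kc*(n:ℝ)) :=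
      mul_le_mul_of_nonneg_left hE2' hnR.le
    nlinarith [hb, hcc]
  linarith

/-- Condition (ii) for discretize. -/
lemma cond4_lemma {n : ℕ} (hn3 : 3 ≤ n) {c0 : ℝ} (hc0 : 0 < c0)
    (hE3 : 32/(Kc * c0^2) ≤ (n:ℝ)) :
    Real.sqrt n * ((Phi (Real.sqrt (2 * Real.log n)) - 1/2)/((n^2:ℕ):ℝ)) ≤
      (c0 * Real.log n ^ ((3:ℝ)/2)/8) *
        Real.sqrt ((1 - Phi (Real.sqrt (2 * Real.log n)))/2) := by
  have hKc := Kc_pos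
  have hL1 : 1 ≤ Real.log n := one_le_log hn3
  have hL0 : (0:ℝ) < Real.log n := by linarith
  have hnR : (0:ℝ) < (n:ℝ) := by positivity
  have hsL : 0 < Real.sqrt (Real.log n) := Real.sqrt_pos.2 hL0
  have hsL1 : 1 ≤ Real.sqrt (Real.log n) := by
    rw [show (1:ℝ) = Real.sqrt 1 by rw [Real.sqrt_one]]
    exact Real.sqrt_le_sqrt hL1
  have hm0 : (0:ℝ) < ((n^2:ℕ):ℝ) := by positivity
  have hmn : ((n^2:ℕ):ℝ) = (n:ℝ)^2 := by push_cast; ring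
  have hTle1 : Phi (Real.sqrt (2 * Real.log n)) ≤ 1 := Phi_le_one _
  have hT1' := qmin_lb hn3
  set L : ℝ := Real.log n
  set T : ℝ := Phi (Real.sqrt (2 * L))
  set lam : ℝ := c0 * L ^ ((3:ℝ)/2) with hlamdef
  have hrpow0 : 0 < L ^ ((3:ℝ)/2) := Real.rpow_pos_of_pos hL0 _
  have hlam0 : 0 < lam := mul_pos hc0 hrpow0
  have hlamsq : lam^2 = c0^2 * L^3 := by
    rw [hlamdef, mul_pow, ← Real.rpow_natCast (L ^ ((3:ℝ)/2)) 2,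
      ← Real.rpow_mul hL0.le]
    norm_num
  have hδb : (T - 1/2)/((n^2:ℕ):ℝ) ≤ 1/(2*(n:ℝ)^2) := by
    rw [hmn, div_le_div_iff₀ (by positivity) (by positivity)]
    nlinarith
  have hrhs : Real.sqrt (Kc/(2*(n:ℝ)*Real.sqrt L)) ≤ Real.sqrt ((1 - T)/2) := by
    apply Real.sqrt_le_sqrt
    rw [div_le_div_iff₀ (by positivity) (by norm_num)]
    calc Kc * 2 = (Kc / ((n:ℝ) * Real.sqrt L)) * (2 * (n:ℝ) * Real.sqrt L) := by
          field_simp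
      _ ≤ (1 - T) * (2 * (n:ℝ) * Real.sqrt L) := by
          apply mul_le_mul_of_nonneg_right hT1' (by positivity)
  have hlhs : Real.sqrt n * (1/(2*(n:ℝ)^2)) ≤
      (lam/8) * Real.sqrt (Kc/(2*(n:ℝ)*Real.sqrt L)) := by
    rw [show Real.sqrt n * (1/(2*(n:ℝ)^2)) = Real.sqrt (n / (4*(n:ℝ)^4)) by
      rw [Real.sqrt_div hnR.le]
      rw [show Real.sqrt (4*(n:ℝ)^4) = 2*(n:ℝ)^2 by
        rw [show 4*(n:ℝ)^4 = (2*(n:ℝ)^2)^2 by ring, Real.sqrt_sq (by positivity)]]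
      ring]
    rw [show (lam/8) * Real.sqrt (Kc/(2*(n:ℝ)*Real.sqrt L)) =
        Real.sqrt (lam^2/64 * (Kc/(2*(n:ℝ)*Real.sqrt L))) by
      rw [Real.sqrt_mul (by positivity), show lam^2/64 = (lam/8)^2 by ring,
        Real.sqrt_sq (by positivity)]]
    apply Real.sqrt_le_sqrt
    rw [hlamsq]
    have hLsL : Real.sqrt L ≤ L^3 := by
      have hsLle : Real.sqrt L ≤ L := by
        nlinarith [Real.sq_sqrt hL0.le, mul_nonneg (Real.sqrt_nonneg L)
          (show (0:ℝ) ≤ Real.sqrt L - 1 by linarith)]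
      have hL3 : L ≤ L^3 := by
        nlinarith [mul_nonneg (mul_nonneg (show (0:ℝ) ≤ L by linarith)
          (show (0:ℝ) ≤ L - 1 by linarith)) (show (0:ℝ) ≤ L + 1 by linarith)]
      linarith
    have hE3' : 32 ≤ Kc * c0^2 * (n:ℝ) := by
      rw [div_le_iff₀ (by positivity)] at hE3
      linarith [hE3]
    have hn1 : (1:ℝ) ≤ (n:ℝ) := by
      have : (3:ℝ) ≤ (n:ℝ) := by exact_mod_cast hn3
      linarith
    rw [show c0^2*L^3/64 * (Kc/(2*(n:ℝ)*Real.sqrt L)) =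
        (c0^2*L^3*Kc)/(128*((n:ℝ)*Real.sqrt L)) by
      field_simp; ring]
    rw [div_le_div_iff₀ (by positivity) (by positivity)]
    calc (n:ℝ) * (128*((n:ℝ)*Real.sqrt L)) = 128*((n:ℝ)^2*Real.sqrt L) := by ring
      _ ≤ 128*((n:ℝ)^2*L^3) := by
          apply mul_le_mul_of_nonneg_left _ (by norm_num)
          exact mul_le_mul_of_nonneg_left hLsL (by positivity)
      _ ≤ (4*(Kc*c0^2*(n:ℝ)))*((n:ℝ)^2*L^3) := by
          apply mul_le_mul_of_nonneg_right (by linarith)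
          exact mul_nonneg (by positivity) (pow_nonneg hL0.le 3)
      _ = (4*Kc*c0^2*L^3)*(n:ℝ)^3 := by ring
      _ ≤ (4*Kc*c0^2*L^3)*(n:ℝ)^4 := by
          apply mul_le_mul_of_nonneg_left _
            (by positivity)
          nlinarith [mul_nonneg (pow_nonneg hnR.le 3)
            (show (0:ℝ) ≤ (n:ℝ)-1 by linarith)]
      _ = c0^2*L^3*Kc * (4*(n:ℝ)^4) := by ring
  calc Real.sqrt n * ((T - 1/2)/((n^2:ℕ):ℝ)) ≤ Real.sqrt n * (1/(2*(n:ℝ)^2)) := by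
        apply mul_le_mul_of_nonneg_left hδb (Real.sqrt_nonneg _)
    _ ≤ (lam/8) * Real.sqrt (Kc/(2*(n:ℝ)*Real.sqrt L)) := hlhs
    _ ≤ (lam/8) * Real.sqrt ((1 - T)/2) := by
        apply mul_le_mul_of_nonneg_left hrhs (by positivity)
    _ = (lam/8) * Real.sqrt ((1 - T)/2) := rfl

/-- Exponent bound 1. -/
lemma exp1_lemma {c0 L α : ℝ} (hc0 : 0 < c0) (hL1 : 1 ≤ L) (hα3 : 0 < α + 3)
    (hE4 : Real.sqrt (1024*(α+3))/c0 ≤ L) :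
    (α+3) * L ≤ (c0 * L ^ ((3:ℝ)/2))^2/1024 := by
  have hL0 : (0:ℝ) < L := by linarith
  have hlamsq : (c0 * L ^ ((3:ℝ)/2))^2 = c0^2 * L^3 := by
    rw [mul_pow, ← Real.rpow_natCast (L ^ ((3:ℝ)/2)) 2, ← Real.rpow_mul hL0.le]
    norm_num
  rw [hlamsq]
  have h4' : Real.sqrt (1024*(α+3)) ≤ c0 * L := by
    rw [div_le_iff₀ hc0] at hE4
    linarith [hE4]
  have hsq : Real.sqrt (1024*(α+3)) ^ 2 = 1024*(α+3) :=
    Real.sq_sqrt (by positivity)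
  have h5' : 1024*(α+3) ≤ c0^2 * L^2 := by
    nlinarith [Real.sqrt_nonneg (1024*(α+3))]
  nlinarith

/-- Exponent bound 2. -/
lemma exp2_lemma {n : ℕ} {c0 L α p : ℝ} (hc0 : 0 < c0) (hL1 : 1 ≤ L) (hα3 : 0 < α + 3)
    (hnR : (0:ℝ) < (n:ℝ))
    (hE5 : (4096*(α+3)^2/(Kc * c0^2))^2 ≤ L)
    (hqp : Kc/((n:ℝ) * Real.sqrt L) ≤ 1 - p) :
    (α+3) * L ≤ (c0 * L ^ ((3:ℝ)/2)/64) * Real.sqrt ((n:ℝ)*(1-p)) := by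
  have hKc := Kc_pos
  have hL0 : (0:ℝ) < L := by linarith
  have hsL : 0 < Real.sqrt L := Real.sqrt_pos.2 hL0
  have hsL1 : 1 ≤ Real.sqrt L := by
    rw [show (1:ℝ) = Real.sqrt 1 by rw [Real.sqrt_one]]
    exact Real.sqrt_le_sqrt hL1
  set lam : ℝ := c0 * L ^ ((3:ℝ)/2) with hlamdef
  have hrpow0 : 0 < L ^ ((3:ℝ)/2) := Real.rpow_pos_of_pos hL0 _
  have hlam0 : 0 < lam := mul_pos hc0 hrpow0
  have hlamsq : lam^2 = c0^2 * L^3 := by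
    rw [hlamdef, mul_pow, ← Real.rpow_natCast (L ^ ((3:ℝ)/2)) 2, ← Real.rpow_mul hL0.le]
    norm_num
  have hexp2base : 4096*(α+3)^2/(Kc * c0^2) ≤ Real.sqrt L := by
    have := Real.sqrt_le_sqrt hE5
    rwa [Real.sqrt_sq (div_nonneg (by positivity)
      (le_of_lt (mul_pos hKc (pow_pos hc0 2))))] at this
  have hexp2' : 4096*(α+3)^2 ≤ Kc*c0^2*Real.sqrt L := by
    rw [div_le_iff₀ (mul_pos hKc (pow_pos hc0 2))] at hexp2base
    linarith
  have hnq : Kc/Real.sqrt L ≤ (n:ℝ)*(1 - p) := by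
    have e1 : Kc/Real.sqrt L = (Kc/((n:ℝ)*Real.sqrt L)) * (n:ℝ) := by
      field_simp
    have e2 : (Kc/((n:ℝ)*Real.sqrt L)) * (n:ℝ) ≤ (1-p)*(n:ℝ) :=
      mul_le_mul_of_nonneg_right hqp hnR.le
    rw [e1]
    linarith
  have hs1 : Real.sqrt (Kc/Real.sqrt L) ≤ Real.sqrt ((n:ℝ)*(1 - p)) :=
    Real.sqrt_le_sqrt hnq
  have h1 : ((α+3)*L*64/lam)^2 ≤ Kc/Real.sqrt L := by
    rw [div_pow, div_le_div_iff₀ (by positivity) (by linarith), hlamsq]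
    have hfact : (0:ℝ) ≤ L^2 * Real.sqrt L := by positivity
    calc ((α+3)*L*64)^2 * Real.sqrt L = 4096*(α+3)^2 * (L^2 * Real.sqrt L) := by ring
      _ ≤ (Kc*c0^2*Real.sqrt L) * (L^2 * Real.sqrt L) :=
          mul_le_mul_of_nonneg_right hexp2' hfact
      _ = Kc*(c0^2*(L^2*(Real.sqrt L*Real.sqrt L))) := by ring
      _ = Kc*(c0^2*L^3) := by rw [Real.mul_self_sqrt hL0.le]; ring
  have h2 : (α+3)*L*64/lam ≤ Real.sqrt (Kc/Real.sqrt L) := by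
    have := Real.sqrt_le_sqrt h1
    rwa [Real.sqrt_sq (by positivity)] at this
  have h3 : (α+3)*L*64/lam ≤ Real.sqrt ((n:ℝ)*(1 - p)) := le_trans h2 hs1
  rw [div_le_iff₀ hlam0] at h3
  nlinarith [h3]

section Helpers

variable {Ω : Type} [MeasurableSpace Ω] {Q : Measure Ω} [IsProbabilityMeasure Q]
variable {n : ℕ} {U : Fin n → Ω → ℝ}

/-- Per-grid-point probability bound, in exponential form. -/
lemma gridpoint_bound (hiid : IIDWithCdf Q U unifCdf) (hn : 0 < n) {p : ℝ}
    (hp : 1/2 ≤ p) (hp1 : p < 1) {lam b : ℝ} (hlam0 : 0 < lam) (hb0 : 0 ≤ b)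
    (hb1 : b ≤ lam^2/1024) (hb2 : b ≤ (lam/64) * Real.sqrt ((n:ℝ)*(1-p))) :
    Q {ω | (lam/16) * Real.sqrt ((1 - p)/n) ≤ |empCdf n (fun i => U i ω) p - p|} ≤
      ENNReal.ofReal (2 * Real.exp (-b)) := by
  have hnR : (0:ℝ) < (n:ℝ) := by exact_mod_cast hn
  have hq0 : 0 < 1 - p := by linarith
  set y : ℝ := (lam/16) * Real.sqrt ((1 - p)/n) with hydef
  have hy0 : 0 ≤ y := by rw [hydef]; positivity
  refine le_trans (pointBound hiid hn hp hp1 hy0) (ENNReal.ofReal_le_ofReal ?_)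
  have hsqy : Real.sqrt ((1 - p)/n) ^ 2 = (1 - p)/n := Real.sq_sqrt (by positivity)
  have hcomp1 : ((n:ℝ)*y)^2/(4*(n:ℝ)*(1 - p)) = lam^2/1024 := by
    have e1 : ((n:ℝ)*y)^2 = (n:ℝ)^2*(lam/16)^2*((1 - p)/n) := by
      rw [hydef, mul_pow, mul_pow, hsqy]; ring
    rw [e1]; field_simp; ring
  have hsq2 : Real.sqrt ((n:ℝ)*(1 - p)) = (n:ℝ) * Real.sqrt ((1 - p)/(n:ℝ)) := by
    rw [show (n:ℝ)*(1 - p) = (n:ℝ)^2*((1 - p)/(n:ℝ)) by field_simp,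
      Real.sqrt_mul (by positivity), Real.sqrt_sq hnR.le]
  have hcomp2 : (n:ℝ)*y/4 = (lam/64) * Real.sqrt ((n:ℝ)*(1 - p)) := by
    rw [hydef, hsq2]; ring
  have hmin : b ≤ min (((n:ℝ)*y)^2/(4*(n:ℝ)*(1 - p))) ((n:ℝ)*y/4) := by
    apply le_min
    · rw [hcomp1]; linarith
    · rw [hcomp2]; linarith
  have hee := Real.exp_le_exp.2 (neg_le_neg hmin)
  linarith

/-- Union bound over the grid. -/
lemma union_range_bound (Q : Measure Ω) (A : ℕ → Set Ω) (E : Set Ω)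
    (hsub : E ⊆ ⋃ k ∈ Finset.range (n^2+1), A k) {b : ENNReal}
    (hA : ∀ k ≤ n^2, Q (A k) ≤ b) : Q E ≤ ((n^2+1 : ℕ) : ENNReal) * b := by
  calc Q E ≤ Q (⋃ k ∈ Finset.range (n^2+1), A k) := measure_mono hsub
    _ ≤ ∑ k ∈ Finset.range (n^2+1), Q (A k) := measure_biUnion_finset_le _ _
    _ ≤ ∑ _k ∈ Finset.range (n^2+1), b :=
        Finset.sum_le_sum (fun k hk => hA k (Nat.lt_succ_iff.1 (Finset.mem_range.1 hk)))
    _ = ((n^2+1 : ℕ) : ENNReal) * b := by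
        rw [Finset.sum_const, Finset.card_range, nsmul_eq_mul]

/-- The final counting estimate. -/
lemma count_bound {n : ℕ} (hn3 : 3 ≤ n) {α : ℝ} (hα0 : 0 < α) :
    ((n^2+1 : ℕ) : ENNReal) * ENNReal.ofReal (2 * (n:ℝ) ^ (-(α+3))) ≤
      ENNReal.ofReal (4 * (n:ℝ) ^ (-α)) := by
  have hnR : (0:ℝ) < (n:ℝ) := by positivity
  rw [show ((n^2+1 : ℕ) : ENNReal) = ENNReal.ofReal ((n^2+1 : ℕ):ℝ) by
      rw [ENNReal.ofReal_natCast],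
    ← ENNReal.ofReal_mul (by positivity)]
  apply ENNReal.ofReal_le_ofReal
  have hsplit : (n:ℝ)^(-(α+3)) = (n:ℝ)^(-α) * ((n:ℝ)^3)⁻¹ := by
    rw [show -(α+3) = -α + -(3:ℝ) by ring, Real.rpow_add hnR]
    congr 1
    rw [Real.rpow_neg hnR.le]
    congr 1
    rw [show (3:ℝ) = ((3:ℕ):ℝ) by norm_num, Real.rpow_natCast]
  rw [hsplit]
  have hpow : 0 < (n:ℝ)^(-α) := Real.rpow_pos_of_pos hnR _
  have h3p : (0:ℝ) < (n:ℝ)^3 := by positivity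
  have hcast : ((n^2+1 : ℕ):ℝ) = (n:ℝ)^2 + 1 := by push_cast; ring
  rw [hcast]
  have hn3R : (3:ℝ) ≤ (n:ℝ) := by exact_mod_cast hn3
  calc ((n:ℝ)^2+1) * (2*((n:ℝ)^(-α) * ((n:ℝ)^3)⁻¹)) =
      (((n:ℝ)^2+1)*2/(n:ℝ)^3) * (n:ℝ)^(-α) := by field_simp
    _ ≤ 4 * (n:ℝ)^(-α) := by
        apply mul_le_mul_of_nonneg_right _ hpow.le
        rw [div_le_iff₀ h3p]
        nlinarith

end Helpers

theorem stmt8aux (c0 : ℝ) (hc0 : 0 < c0) :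
    ∃ C > 0, ∃ N : ℕ, ∀ n ≥ N,
      ∀ (Ω : Type) [MeasurableSpace Ω] (Q : Measure Ω), IsProbabilityMeasure Q →
        ∀ U : Fin n → Ω → ℝ, IIDWithCdf Q U unifCdf →
          Q {ω | c0 * Real.log n ^ ((3 : ℝ) / 2) ≤ WnPlus n (fun i => U i ω)} ≤
            ENNReal.ofReal (C * (n : ℝ) ^ (-(1.5 * c0 / Real.sqrt (8 * Real.pi)))) := by
  have hKc := Kc_pos
  set α : ℝ := 1.5 * c0 / Real.sqrt (8 * Real.pi) with hαdef
  have hα0 : 0 < α := div_pos (by linarith) (Real.sqrt_pos.2 (by positivity))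
  have hα3 : 0 < α + 3 := by linarith
  have hev : ∀ᶠ (n : ℕ) in Filter.atTop, (3 ≤ n ∧ (1/(2*Kc))^2 ≤ (n:ℝ) ∧
      32/(Kc * c0^2) ≤ (n:ℝ) ∧ Real.sqrt (1024*(α+3))/c0 ≤ Real.log n ∧
      (4096*(α+3)^2/(Kc * c0^2))^2 ≤ Real.log n) := by
    have hlog := Real.tendsto_log_atTop.comp
      (tendsto_natCast_atTop_atTop (R := ℝ))
    filter_upwards [Filter.eventually_ge_atTop 3,
      (tendsto_natCast_atTop_atTop (R := ℝ)).eventually_ge_atTop ((1/(2*Kc))^2),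
      (tendsto_natCast_atTop_atTop (R := ℝ)).eventually_ge_atTop (32/(Kc * c0^2)),
      hlog.eventually_ge_atTop (Real.sqrt (1024*(α+3))/c0),
      hlog.eventually_ge_atTop ((4096*(α+3)^2/(Kc * c0^2))^2)] with n h1 h2 h3 h4 h5
    exact ⟨h1, h2, h3, h4, h5⟩
  obtain ⟨N, hN⟩ := Filter.eventually_atTop.1 hev
  refine ⟨4, by norm_num, N, ?_⟩
  intro n hn Ω _ Q hPQ U hiid
  haveI := hPQ
  obtain ⟨hn3, hE2, hE3, hE4, hE5⟩ := hN n hn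
  have hn0 : 0 < n := by omega
  have hnR : (0:ℝ) < (n:ℝ) := by positivity
  have hL1 : 1 ≤ Real.log n := one_le_log hn3
  have hL0 : (0:ℝ) < Real.log n := by linarith
  have hlam0 : 0 < c0 * Real.log n ^ ((3:ℝ)/2) :=
    mul_pos hc0 (Real.rpow_pos_of_pos hL0 _)
  have hhalfT : 1/2 ≤ Phi (Real.sqrt (2 * Real.log n)) := half_le_Phi (Real.sqrt_nonneg _)
  have hqmin0 := qmin_pos hn3
  have hT1 : Phi (Real.sqrt (2 * Real.log n)) < 1 := by linarith
  have hcond3 := cond3_lemma hn3 hE2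
  have hcond4 := cond4_lemma hn3 hc0 hE3
  -- per-point bound
  have hpoint : ∀ k : ℕ, k ≤ n^2 →
      Q {ω | (c0 * Real.log n ^ ((3:ℝ)/2)/16) * Real.sqrt ((1 - gp n k)/n) ≤
          |empCdf n (fun i => U i ω) (gp n k) - gp n k|} ≤
        ENNReal.ofReal (2 * Real.exp (-((α+3) * Real.log n))) := by
    intro k hk
    have hgpT : gp n k ≤ Phi (Real.sqrt (2 * Real.log n)) := gp_le hn0 hhalfT hk
    have hpk : 1/2 ≤ gp n k := half_le_gp hhalfT k
    have hpk1 : gp n k < 1 := lt_of_le_of_lt hgpT hT1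
    have hqp : Kc/((n:ℝ) * Real.sqrt (Real.log n)) ≤ 1 - gp n k :=
      le_trans (qmin_lb hn3) (by linarith)
    exact gridpoint_bound hiid hn0 hpk hpk1 hlam0
      (by positivity)
      (exp1_lemma hc0 hL1 hα3 hE4)
      (exp2_lemma hc0 hL1 hα3 hnR hE5 hqp)
  -- union bound and conclusion
  have hsubE : {ω | c0 * Real.log n ^ ((3:ℝ)/2) ≤ WnPlus n (fun i => U i ω)} ⊆
      ⋃ k ∈ Finset.range (n^2+1),
        {ω | (c0 * Real.log n ^ ((3:ℝ)/2)/16) * Real.sqrt ((1 - gp n k)/n) ≤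
          |empCdf n (fun i => U i ω) (gp n k) - gp n k|} := by
    intro ω hω
    rw [Set.mem_setOf_eq] at hω
    obtain ⟨k, hk, hkb⟩ := discretize hn0 (fun i => U i ω) hlam0 hcond3 hcond4 hT1 hω
    exact Set.mem_biUnion (Finset.mem_range.2 (by omega)) hkb
  refine le_trans (union_range_bound Q _ _ hsubE (fun k hk => hpoint k hk)) ?_
  have hrpow : Real.exp (-((α+3) * Real.log n)) = (n:ℝ) ^ (-(α+3)) := by
    rw [Real.rpow_def_of_pos hnR]
    congr 1
    ring
  rw [hrpow]
  exact count_bound hn3 hα0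

end Final

/-- Lemma 3.2: tail bound for `Wₙ⁺` at level `c₀ (log n)^{3/2}`. -/
theorem stmt8 (c0 : ℝ) (hc0 : 0 < c0) :
    ∃ C > 0, ∃ N : ℕ, ∀ n ≥ N,
      ∀ (Ω : Type) [MeasurableSpace Ω] (Q : Measure Ω), IsProbabilityMeasure Q →
        ∀ U : Fin n → Ω → ℝ, IIDWithCdf Q U unifCdf →
          Q {ω | c0 * Real.log n ^ ((3 : ℝ) / 2) ≤ WnPlus n (fun i => U i ω)} ≤
            ENNReal.ofReal (C * (n : ℝ) ^ (-(1.5 * c0 / Real.sqrt (8 * Real.pi)))) := by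
  exact stmt8aux c0 hc0

end
end
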